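/- arXiv:1108.4982 — 8 statements merged into one kernel-verified Lean document; each statement's English description precedes it below -/
import Mathlib

section
/- Let Φ be a real symmetric positive definite n×n matrix, Ψ a real symmetric m×m matrix, η a real number, B a real n×m matrix, and D a real p×m matrix. Then Ψ − η·I_m + Bᵀ Φ B + Dᵀ D ≺ 0 holds if and only if the symmetric block matrix with block rows [Ψ − η·I_m, Bᵀ, Dᵀ], [B, −Φ⁻¹, 0], [D, 0, −I_p] is negative definite. -/
open Matrix

/-- A real matrix is negative definite if its negation is positive definite. -/
def Matrix.NegDef {n : Type*} [Fintype n] (M : Matrix n n ℝ) : Prop := (-M).PosDef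

section Blocks

variable {R i1 i2 i3 i4 i5 i6 j1 j2 j3 j4 j5 j6 : Type*}

/-- Assemble a 3×3 block matrix from its blocks. -/
def blk3 (A11 : Matrix i1 j1 R) (A12 : Matrix i1 j2 R) (A13 : Matrix i1 j3 R)
    (A21 : Matrix i2 j1 R) (A22 : Matrix i2 j2 R) (A23 : Matrix i2 j3 R)
    (A31 : Matrix i3 j1 R) (A32 : Matrix i3 j2 R) (A33 : Matrix i3 j3 R) :
    Matrix (i1 ⊕ (i2 ⊕ i3)) (j1 ⊕ (j2 ⊕ j3)) R :=
  fromBlocks A11 (fromCols A12 A13) (fromRows A21 A31) (fromBlocks A22 A23 A32 A33)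

/-- Assemble a 4×4 block matrix from its blocks. -/
def blk4 (A11 : Matrix i1 j1 R) (A12 : Matrix i1 j2 R) (A13 : Matrix i1 j3 R) (A14 : Matrix i1 j4 R)
    (A21 : Matrix i2 j1 R) (A22 : Matrix i2 j2 R) (A23 : Matrix i2 j3 R) (A24 : Matrix i2 j4 R)
    (A31 : Matrix i3 j1 R) (A32 : Matrix i3 j2 R) (A33 : Matrix i3 j3 R) (A34 : Matrix i3 j4 R)
    (A41 : Matrix i4 j1 R) (A42 : Matrix i4 j2 R) (A43 : Matrix i4 j3 R) (A44 : Matrix i4 j4 R) :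
    Matrix (i1 ⊕ (i2 ⊕ (i3 ⊕ i4))) (j1 ⊕ (j2 ⊕ (j3 ⊕ j4))) R :=
  fromBlocks A11 (fromCols A12 (fromCols A13 A14))
    (fromRows A21 (fromRows A31 A41)) (blk3 A22 A23 A24 A32 A33 A34 A42 A43 A44)

/-- Assemble a 5×5 block matrix from its blocks. -/
def blk5 (A11 : Matrix i1 j1 R) (A12 : Matrix i1 j2 R) (A13 : Matrix i1 j3 R) (A14 : Matrix i1 j4 R)
    (A15 : Matrix i1 j5 R)
    (A21 : Matrix i2 j1 R) (A22 : Matrix i2 j2 R) (A23 : Matrix i2 j3 R) (A24 : Matrix i2 j4 R)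
    (A25 : Matrix i2 j5 R)
    (A31 : Matrix i3 j1 R) (A32 : Matrix i3 j2 R) (A33 : Matrix i3 j3 R) (A34 : Matrix i3 j4 R)
    (A35 : Matrix i3 j5 R)
    (A41 : Matrix i4 j1 R) (A42 : Matrix i4 j2 R) (A43 : Matrix i4 j3 R) (A44 : Matrix i4 j4 R)
    (A45 : Matrix i4 j5 R)
    (A51 : Matrix i5 j1 R) (A52 : Matrix i5 j2 R) (A53 : Matrix i5 j3 R) (A54 : Matrix i5 j4 R)
    (A55 : Matrix i5 j5 R) :
    Matrix (i1 ⊕ (i2 ⊕ (i3 ⊕ (i4 ⊕ i5)))) (j1 ⊕ (j2 ⊕ (j3 ⊕ (j4 ⊕ j5)))) R :=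
  fromBlocks A11 (fromCols A12 (fromCols A13 (fromCols A14 A15)))
    (fromRows A21 (fromRows A31 (fromRows A41 A51)))
    (blk4 A22 A23 A24 A25 A32 A33 A34 A35 A42 A43 A44 A45 A52 A53 A54 A55)

/-- Assemble a 6×6 block matrix from its blocks. -/
def blk6 (A11 : Matrix i1 j1 R) (A12 : Matrix i1 j2 R) (A13 : Matrix i1 j3 R) (A14 : Matrix i1 j4 R)
    (A15 : Matrix i1 j5 R) (A16 : Matrix i1 j6 R)
    (A21 : Matrix i2 j1 R) (A22 : Matrix i2 j2 R) (A23 : Matrix i2 j3 R) (A24 : Matrix i2 j4 R)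
    (A25 : Matrix i2 j5 R) (A26 : Matrix i2 j6 R)
    (A31 : Matrix i3 j1 R) (A32 : Matrix i3 j2 R) (A33 : Matrix i3 j3 R) (A34 : Matrix i3 j4 R)
    (A35 : Matrix i3 j5 R) (A36 : Matrix i3 j6 R)
    (A41 : Matrix i4 j1 R) (A42 : Matrix i4 j2 R) (A43 : Matrix i4 j3 R) (A44 : Matrix i4 j4 R)
    (A45 : Matrix i4 j5 R) (A46 : Matrix i4 j6 R)
    (A51 : Matrix i5 j1 R) (A52 : Matrix i5 j2 R) (A53 : Matrix i5 j3 R) (A54 : Matrix i5 j4 R)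
    (A55 : Matrix i5 j5 R) (A56 : Matrix i5 j6 R)
    (A61 : Matrix i6 j1 R) (A62 : Matrix i6 j2 R) (A63 : Matrix i6 j3 R) (A64 : Matrix i6 j4 R)
    (A65 : Matrix i6 j5 R) (A66 : Matrix i6 j6 R) :
    Matrix (i1 ⊕ (i2 ⊕ (i3 ⊕ (i4 ⊕ (i5 ⊕ i6))))) (j1 ⊕ (j2 ⊕ (j3 ⊕ (j4 ⊕ (j5 ⊕ j6))))) R :=
  fromBlocks A11 (fromCols A12 (fromCols A13 (fromCols A14 (fromCols A15 A16))))
    (fromRows A21 (fromRows A31 (fromRows A41 (fromRows A51 A61))))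
    (blk5 A22 A23 A24 A25 A26 A32 A33 A34 A35 A36 A42 A43 A44 A45 A46
      A52 A53 A54 A55 A56 A62 A63 A64 A65 A66)

end Blocks

/-!
Negating the block matrix puts it in the form `[[ηI − Ψ, C], [Cᴴ, diag(Φ⁻¹, I)]]` with
`C = [−Bᵀ, −Dᵀ]`. Its lower-right corner is positive definite with inverse `diag(Φ, I)`, and the
Schur complement `ηI − Ψ − BᵀΦB − DᵀD` of that corner is the negated left-hand side. A Hermitian
block matrix with positive definite corner is positive definite iff its Schur complement is:
semidefiniteness transfers, and `det M = det D · det (A − B D⁻¹ Bᴴ)` transfers invertibility.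
-/

open scoped ComplexOrder

namespace Matrix

variable {𝕜 l m n : Type*} [RCLike 𝕜] [Fintype l] [Fintype m] [Fintype n]
  [DecidableEq l] [DecidableEq m] [DecidableEq n]

theorem posDef_iff_posSemidef_and_det_ne_zero {A : Matrix n n 𝕜} :
    A.PosDef ↔ A.PosSemidef ∧ A.det ≠ 0 :=
  ⟨fun h => ⟨h.posSemidef, h.det_pos.ne'⟩, fun h => h.1.posDef_iff_det_ne_zero.mpr h.2⟩

theorem posDef_fromBlocks₂₂_iff (A : Matrix m m 𝕜) (B : Matrix m n 𝕜) {D : Matrix n n 𝕜}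
    (hD : D.PosDef) :
    (fromBlocks A B Bᴴ D).PosDef ↔ (A - B * D⁻¹ * Bᴴ).PosDef := by
  have := hD.isUnit.invertible
  simp only [posDef_iff_posSemidef_and_det_ne_zero, PosDef.fromBlocks₂₂ A B hD,
    det_fromBlocks₂₂, invOf_eq_nonsing_inv, mul_ne_zero_iff, hD.det_pos.ne', ne_eq,
    not_false_eq_true, true_and]

theorem PosDef.fromBlocks_zero_zero {P : Matrix m m 𝕜} {Q : Matrix n n 𝕜} (hP : P.PosDef)
    (hQ : Q.PosDef) : (fromBlocks P 0 0 Q).PosDef := by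
  simpa using (posDef_fromBlocks₂₂_iff P (0 : Matrix m n 𝕜) hQ).mpr (by simpa using hP)

theorem inv_fromBlocks_zero_zero {P : Matrix m m 𝕜} {Q : Matrix n n 𝕜} (hP : IsUnit P)
    (hQ : IsUnit Q) : (fromBlocks P 0 0 Q)⁻¹ = fromBlocks P⁻¹ 0 0 Q⁻¹ := by
  simp [inv_fromBlocks_zero₂₁_of_isUnit_iff P 0 Q (iff_of_true hP hQ)]

theorem posDef_blk3_iff (A : Matrix l l 𝕜) (B : Matrix l m 𝕜) (C : Matrix l n 𝕜)
    {P : Matrix m m 𝕜} {Q : Matrix n n 𝕜} (hP : P.PosDef) (hQ : Q.PosDef) :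
    (blk3 A B C Bᴴ P 0 Cᴴ 0 Q).PosDef ↔ (A - B * P⁻¹ * Bᴴ - C * Q⁻¹ * Cᴴ).PosDef := by
  rw [blk3, ← conjTranspose_fromCols_eq_fromRows_conjTranspose,
    posDef_fromBlocks₂₂_iff _ _ (hP.fromBlocks_zero_zero hQ),
    inv_fromBlocks_zero_zero hP.isUnit hQ.isUnit, fromCols_mul_fromBlocks,
    conjTranspose_fromCols_eq_fromRows_conjTranspose, fromCols_mul_fromRows]
  simp only [Matrix.mul_zero, add_zero, zero_add, sub_add_eq_sub_sub]

end Matrix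

theorem schur_3x3_negdef_iff_general
    (n m p : ℕ) (Φ : Matrix (Fin n) (Fin n) ℝ) (hΦ : Φ.PosDef)
    (Ψ : Matrix (Fin m) (Fin m) ℝ) (η : ℝ)
    (B : Matrix (Fin n) (Fin m) ℝ) (D : Matrix (Fin p) (Fin m) ℝ) :
    (Ψ - η • (1 : Matrix (Fin m) (Fin m) ℝ) + Bᵀ * Φ * B + Dᵀ * D).NegDef ↔
      (blk3 (Ψ - η • 1) Bᵀ Dᵀ
            B (-Φ⁻¹) 0
            D 0 (-1)).NegDef := by
  have hneg : -blk3 (Ψ - η • 1) Bᵀ Dᵀ B (-Φ⁻¹) 0 D 0 (-1) =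
      blk3 (-(Ψ - η • 1)) (-Bᵀ) (-Dᵀ) (-Bᵀ)ᴴ Φ⁻¹ 0 (-Dᵀ)ᴴ 0 1 := by
    simp [blk3, fromBlocks_neg, fromCols_neg, fromRows_neg]
  rw [NegDef, NegDef, hneg, posDef_blk3_iff _ _ _ hΦ.inv PosDef.one,
    nonsing_inv_nonsing_inv Φ hΦ.det_pos.ne'.isUnit, inv_one]
  congr! 1
  simp only [conjTranspose_eq_transpose_of_trivial, transpose_neg, transpose_transpose,
    Matrix.neg_mul, Matrix.mul_neg, neg_neg, Matrix.mul_one]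
  abel

/-- Schur complement form: `Ψ − η·I + BᵀΦB + DᵀD ≺ 0` iff the 3×3 block matrix
`[[Ψ − η·I, Bᵀ, Dᵀ], [B, −Φ⁻¹, 0], [D, 0, −I]]` is negative definite. -/
theorem schur_3x3_negdef_iff
    (n m p : ℕ) (Φ : Matrix (Fin n) (Fin n) ℝ) (hΦs : Φ.IsSymm) (hΦ : Φ.PosDef)
    (Ψ : Matrix (Fin m) (Fin m) ℝ) (hΨs : Ψ.IsSymm) (η : ℝ)
    (B : Matrix (Fin n) (Fin m) ℝ) (D : Matrix (Fin p) (Fin m) ℝ) :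
    (Ψ - η • (1 : Matrix (Fin m) (Fin m) ℝ) + Bᵀ * Φ * B + Dᵀ * D).NegDef ↔
      (blk3 (Ψ - η • 1) Bᵀ Dᵀ
            B (-Φ⁻¹) 0
            D 0 (-1)).NegDef :=
  schur_3x3_negdef_iff_general n m p Φ hΦ Ψ η B D
end

section
/- Let A be a real n×n matrix and Φ a real symmetric positive definite n×n matrix such that AᵀΦA − Φ is negative definite. Then every complex eigenvalue λ of A (i.e., every element of the spectrum of the complexification of A) satisfies |λ| < 1. -/
/-!
If `A v = μ v` with `v ≠ 0` in `ℂⁿ`, then `v* (AᵀΦA) v = |μ|² v* Φ v`, so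
`v* (Φ - AᵀΦA) v = (1 - |μ|²) v* Φ v`, and both quadratic forms are positive because a real
positive definite matrix stays positive definite over `ℂ`: its complex quadratic form at `v` is the
sum of the real forms at `Re v` and `Im v`.
-/

open Matrix
open scoped ComplexOrder

namespace Matrix

variable {n : Type*} [Fintype n]

theorem exists_mulVec_eq_smul_of_mem_spectrum {K : Type*} [Field K] [DecidableEq n]
    {A : Matrix n n K} {μ : K} (hμ : μ ∈ spectrum K A) :
    ∃ v ≠ 0, A *ᵥ v = μ • v := by
  rw [← spectrum_toLin', ← Module.End.hasEigenvalue_iff_mem_spectrum] at hμ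
  obtain ⟨v, hv⟩ := hμ.exists_hasEigenvector
  exact ⟨v, hv.2, by simpa using hv.apply_eq_smul⟩

variable {𝕜 : Type*} [RCLike 𝕜]

theorem re_star_dotProduct_map_ofReal_mulVec (M : Matrix n n ℝ) (x : n → 𝕜) :
    RCLike.re (star x ⬝ᵥ M.map (algebraMap ℝ 𝕜) *ᵥ x)
      = (fun i ↦ RCLike.re (x i)) ⬝ᵥ M *ᵥ (fun i ↦ RCLike.re (x i))
        + (fun i ↦ RCLike.im (x i)) ⬝ᵥ M *ᵥ (fun i ↦ RCLike.im (x i)) := by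
  simp only [dotProduct, mulVec, Pi.star_apply, map_apply, map_sum, RCLike.mul_re,
    RCLike.mul_im, RCLike.star_def, RCLike.conj_re, RCLike.conj_im, RCLike.algebraMap_eq_ofReal,
    RCLike.ofReal_re, RCLike.ofReal_im, ← Finset.sum_add_distrib]
  refine Finset.sum_congr rfl fun i _ ↦ ?_
  simp only [zero_mul, sub_zero, add_zero, neg_mul, sub_neg_eq_add]

theorem PosDef.map_ofReal {M : Matrix n n ℝ} (hM : M.PosDef) :
    (M.map (algebraMap ℝ 𝕜)).PosDef := by
  have hherm : (M.map (algebraMap ℝ 𝕜)).IsHermitian :=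
    hM.1.map _ fun r ↦ by simp
  refine PosDef.of_dotProduct_mulVec_pos hherm fun x hx ↦ ?_
  have hre_or_im : (fun i ↦ RCLike.re (x i)) ≠ 0 ∨ (fun i ↦ RCLike.im (x i)) ≠ 0 := by
    by_contra! h
    exact hx <| funext fun i ↦
      RCLike.ext (by simpa using congrFun h.1 i) (by simpa using congrFun h.2 i)
  have hpos {y : n → ℝ} (hy : y ≠ 0) : 0 < y ⬝ᵥ M *ᵥ y := by
    simpa using hM.dotProduct_mulVec_pos hy
  have hnonneg (y : n → ℝ) : 0 ≤ y ⬝ᵥ M *ᵥ y := by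
    simpa using hM.posSemidef.dotProduct_mulVec_nonneg y
  rw [RCLike.pos_iff, re_star_dotProduct_map_ofReal_mulVec, hherm.im_star_dotProduct_mulVec_self]
  refine ⟨?_, rfl⟩
  rcases hre_or_im with hre | him
  · exact add_pos_of_pos_of_nonneg (hpos hre) (hnonneg _)
  · exact add_pos_of_nonneg_of_pos (hnonneg _) (hpos him)

theorem norm_lt_one_of_posDef_sub_conjTranspose_mul_mul {A P : Matrix n n 𝕜}
    (hP : P.PosDef) (hA : (P - Aᴴ * P * A).PosDef) {μ : 𝕜} {v : n → 𝕜} (hv : v ≠ 0)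
    (hAv : A *ᵥ v = μ • v) : ‖μ‖ < 1 := by
  have hquad : star v ⬝ᵥ (Aᴴ * P * A) *ᵥ v = ((‖μ‖ ^ 2 : ℝ) : 𝕜) * (star v ⬝ᵥ P *ᵥ v) := by
    rw [← mulVec_mulVec, ← mulVec_mulVec, dotProduct_mulVec, ← star_mulVec, hAv, mulVec_smul,
      star_smul, smul_dotProduct, dotProduct_smul, smul_eq_mul, smul_eq_mul, ← mul_assoc,
      RCLike.ofReal_pow, ← RCLike.conj_mul, RCLike.star_def]
  have hP_pos := hP.re_dotProduct_pos hv
  have hA_pos := hA.re_dotProduct_pos hv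
  rw [sub_mulVec, dotProduct_sub, map_sub, hquad, RCLike.re_ofReal_mul] at hA_pos
  have hμ_sq : ‖μ‖ ^ 2 < 1 := by nlinarith
  exact (sq_lt_one_iff₀ (norm_nonneg μ)).1 hμ_sq

end Matrix

theorem lyapunov_schur_stability_general
    (n : ℕ) (A Φ : Matrix (Fin n) (Fin n) ℝ) (hΦ : Φ.PosDef)
    (h : (-(Aᵀ * Φ * A - Φ)).PosDef) :
    ∀ μ ∈ spectrum ℂ (A.map (algebraMap ℝ ℂ)), ‖μ‖ < 1 := by
  intro μ hμ
  obtain ⟨v, hv, hAv⟩ := exists_mulVec_eq_smul_of_mem_spectrum hμ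
  refine norm_lt_one_of_posDef_sub_conjTranspose_mul_mul hΦ.map_ofReal ?_ hv hAv
  have hAc : (A.map (algebraMap ℝ ℂ))ᴴ = Aᵀ.map (algebraMap ℝ ℂ) := by
    ext; simp
  convert h.map_ofReal (𝕜 := ℂ) using 1
  rw [neg_sub, hAc, Matrix.map_sub _ (map_sub _), Matrix.map_mul, Matrix.map_mul]

/-- Lyapunov criterion for Schur stability: if `AᵀΦA − Φ ≺ 0` for some symmetric positive
definite `Φ`, then every complex eigenvalue of `A` lies in the open unit disc. -/
theorem lyapunov_schur_stability
    (n : ℕ) (A Φ : Matrix (Fin n) (Fin n) ℝ) (hΦs : Φ.IsSymm) (hΦ : Φ.PosDef)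
    (h : (-(Aᵀ * Φ * A - Φ)).PosDef) :
    ∀ μ ∈ spectrum ℂ (A.map (algebraMap ℝ ℂ)), ‖μ‖ < 1 :=
  lyapunov_schur_stability_general n A Φ hΦ h
end

section
/- Let Φ be a real symmetric positive definite n×n matrix, η a real number, 𝒜 a real n×n matrix, ℬ a real n×m matrix, 𝒞 a real p×n matrix, and 𝒟 a real p×m matrix. If the symmetric 4×4 block matrix with block rows [−Φ, 0, 𝒜ᵀ, 𝒞ᵀ], [0, −η·I_m, ℬᵀ, 𝒟ᵀ], [𝒜, ℬ, −Φ⁻¹, 0], [𝒞, 𝒟, 0, −I_p] is negative definite, then every complex eigenvalue λ of 𝒜 satisfies |λ| < 1. -/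
open Matrix

/-!
The congruence `Sᵀ (-M) S` of the negated LMI matrix `-M` by `S = [1; 0; Φ A; 0]` equals
`Φ - Aᵀ Φ A`, so the LMI forces the discrete Lyapunov inequality `Φ - Aᵀ Φ A ≻ 0`. Both `Φ` and
`Φ - Aᵀ Φ A` stay positive definite over `ℂ`, and for an eigenvector `A v = μ v` one has
`vᴴ (Φ - Aᴴ Φ A) v = (1 - ‖μ‖²) vᴴ Φ v`, whence `‖μ‖ < 1`.
-/

open scoped ComplexOrder

namespace Matrix

variable {n : Type*} [Fintype n]

theorem norm_lt_one_of_mem_spectrum_of_posDef {𝕜 : Type*} [RCLike 𝕜] [DecidableEq n]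
    {Φ A : Matrix n n 𝕜} (hΦ : Φ.PosDef) (hL : (Φ - Aᴴ * Φ * A).PosDef) {μ : 𝕜}
    (hμ : μ ∈ spectrum 𝕜 A) : ‖μ‖ < 1 := by
  obtain ⟨v, hv, hAv⟩ := exists_mulVec_eq_smul_of_mem_spectrum hμ
  have hquad : star v ⬝ᵥ ((Φ - Aᴴ * Φ * A) *ᵥ v)
      = ((1 - ‖μ‖ ^ 2 : ℝ) : 𝕜) * (star v ⬝ᵥ (Φ *ᵥ v)) := by
    rw [sub_mulVec, dotProduct_sub, ← mulVec_mulVec, ← mulVec_mulVec, dotProduct_mulVec _ Aᴴ,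
      ← star_mulVec, hAv, star_smul, mulVec_smul, dotProduct_smul, smul_dotProduct]
    simp only [smul_eq_mul, RCLike.ofReal_sub, RCLike.ofReal_one, RCLike.ofReal_pow,
      ← RCLike.mul_conj, RCLike.star_def]
    ring
  have hq := hΦ.re_dotProduct_pos hv
  have hL' := hL.re_dotProduct_pos hv
  rw [hquad, RCLike.re_ofReal_mul] at hL'
  have hμ2 : 0 < 1 - ‖μ‖ ^ 2 := pos_of_mul_pos_left hL' hq.le
  exact (pow_lt_one_iff_of_nonneg (norm_nonneg μ) two_ne_zero).mp (sub_pos.mp hμ2)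

theorem re_star_dotProduct_map_algebraMap_mulVec {𝕜 : Type*} [RCLike 𝕜] (M : Matrix n n ℝ)
    (v : n → 𝕜) :
    RCLike.re (star v ⬝ᵥ (M.map (algebraMap ℝ 𝕜) *ᵥ v))
      = (RCLike.re ∘ v) ⬝ᵥ (M *ᵥ (RCLike.re ∘ v)) + (RCLike.im ∘ v) ⬝ᵥ (M *ᵥ (RCLike.im ∘ v)) := by
  simp only [dotProduct, mulVec, map_sum, Finset.mul_sum, ← Finset.sum_add_distrib]
  refine Finset.sum_congr rfl fun i _ => Finset.sum_congr rfl fun j _ => ?_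
  simp [RCLike.mul_re, RCLike.mul_im]

theorem PosDef.map_algebraMap {𝕜 : Type*} [RCLike 𝕜] {M : Matrix n n ℝ} (hM : M.PosDef) :
    (M.map (algebraMap ℝ 𝕜)).PosDef := by
  have hH : (M.map (algebraMap ℝ 𝕜)).IsHermitian := hM.1.map _ algebraMap_star_comm
  refine .of_dotProduct_mulVec_pos hH fun v hv =>
    RCLike.pos_iff.mpr ⟨?_, hH.im_star_dotProduct_mulVec_self v⟩
  have hre := hM.posSemidef.dotProduct_mulVec_nonneg (RCLike.re ∘ v)
  have him := hM.posSemidef.dotProduct_mulVec_nonneg (RCLike.im ∘ v)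
  simp only [star_trivial] at hre him
  rw [re_star_dotProduct_map_algebraMap_mulVec]
  by_cases hv_re : RCLike.re ∘ v = 0
  · have hv_im : RCLike.im ∘ v ≠ 0 := fun hv_im => hv <| funext fun i =>
      RCLike.ext (by simpa using congrFun hv_re i) (by simpa using congrFun hv_im i)
    simpa [hv_re] using hM.dotProduct_mulVec_pos hv_im
  · exact add_pos_of_pos_of_nonneg (by simpa using hM.dotProduct_mulVec_pos hv_re) him

end Matrix

theorem posDef_sub_transpose_mul_mul_of_negDef_blk4 {n m p : Type*} [Fintype n] [DecidableEq n]
    [Fintype m] [DecidableEq m] [Fintype p] [DecidableEq p] {Φ : Matrix n n ℝ} (hΦ : IsUnit Φ.det)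
    (η : ℝ) (A : Matrix n n ℝ) (B : Matrix n m ℝ) (C : Matrix p n ℝ) (D : Matrix p m ℝ)
    (h : (blk4 (-Φ) 0 Aᵀ Cᵀ 0 ((-η) • 1 : Matrix m m ℝ) Bᵀ Dᵀ A B (-Φ⁻¹) 0 C D 0 (-1)).NegDef) :
    (Φ - Aᵀ * Φ * A).PosDef := by
  set S : Matrix (n ⊕ (m ⊕ (n ⊕ p))) n ℝ := fromRows 1 (fromRows 0 (fromRows (Φ * A) 0))
  have hS : Function.Injective S.mulVec := fun x y hxy => by
    simpa [S, fromRows_mulVec] using congrArg (· ∘ Sum.inl) hxy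
  convert h.conjTranspose_mul_mul_same hS using 1
  rw [Matrix.mul_assoc]
  simp [S, blk4, blk3, transpose_fromRows, fromBlocks_mul_fromRows, fromCols_mul_fromRows,
    nonsing_inv_mul_cancel_left _ _ hΦ, Matrix.mul_assoc, Matrix.mul_add, neg_add_eq_sub]

theorem lmi_4x4_implies_schur_stable_general
    (n m p : ℕ) (Φ : Matrix (Fin n) (Fin n) ℝ) (hΦ : Φ.PosDef) (η : ℝ)
    (A : Matrix (Fin n) (Fin n) ℝ) (B : Matrix (Fin n) (Fin m) ℝ)
    (C : Matrix (Fin p) (Fin n) ℝ) (D : Matrix (Fin p) (Fin m) ℝ)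
    (h : (blk4 (-Φ) 0 Aᵀ Cᵀ
               0 ((-η) • 1 : Matrix (Fin m) (Fin m) ℝ) Bᵀ Dᵀ
               A B (-Φ⁻¹) 0
               C D 0 (-1)).NegDef) :
    ∀ μ ∈ spectrum ℂ (A.map (algebraMap ℝ ℂ)), ‖μ‖ < 1 := by
  have hLyap := posDef_sub_transpose_mul_mul_of_negDef_blk4
    ((isUnit_iff_isUnit_det Φ).mp hΦ.isUnit) η A B C D h
  have hLyapℂ := hLyap.map_algebraMap (𝕜 := ℂ)
  rw [Matrix.map_sub _ (map_sub _), Matrix.map_mul, Matrix.map_mul,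
    ← conjTranspose_eq_transpose_of_trivial, conjTranspose_map _ algebraMap_star_comm] at hLyapℂ
  exact fun μ hμ => norm_lt_one_of_mem_spectrum_of_posDef hΦ.map_algebraMap hLyapℂ hμ

/-- If the 4×4 block LMI of the strict anisotropic norm bounded real lemma is feasible,
then the state matrix `𝒜` is Schur stable. -/
theorem lmi_4x4_implies_schur_stable
    (n m p : ℕ) (Φ : Matrix (Fin n) (Fin n) ℝ) (hΦs : Φ.IsSymm) (hΦ : Φ.PosDef) (η : ℝ)
    (A : Matrix (Fin n) (Fin n) ℝ) (B : Matrix (Fin n) (Fin m) ℝ)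
    (C : Matrix (Fin p) (Fin n) ℝ) (D : Matrix (Fin p) (Fin m) ℝ)
    (h : (blk4 (-Φ) 0 Aᵀ Cᵀ
               0 ((-η) • 1 : Matrix (Fin m) (Fin m) ℝ) Bᵀ Dᵀ
               A B (-Φ⁻¹) 0
               C D 0 (-1)).NegDef) :
    ∀ μ ∈ spectrum ℂ (A.map (algebraMap ℝ ℂ)), ‖μ‖ < 1 :=
  lmi_4x4_implies_schur_stable_general n m p Φ hΦ η A B C D h
end

section
/- Let A be a real n×n matrix, B_w a real n×m matrix, B_u a real n×q matrix, C_z a real p×n matrix, D_zw a real p×m matrix, D_zu a real p×q matrix, η a real number, Ψ a real symmetric positive definite m×m matrix, Π a real symmetric positive definite n×n matrix, and Λ a real q×n matrix. Suppose that the symmetric block matrix with block rows [Ψ − η·I_m, B_wᵀ, D_zwᵀ], [B_w, −Π, 0], [D_zw, 0, −I_p] is negative definite and that the symmetric block matrix with block rows [−Π, 0, (AΠ + B_uΛ)ᵀ, (C_zΠ + D_zuΛ)ᵀ], [0, −η·I_m, B_wᵀ, D_zwᵀ], [AΠ + B_uΛ, B_w, −Π, 0], [C_zΠ + D_zuΛ,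 D_zw, 0, −I_p] is negative definite. Then, with K := ΛΠ⁻¹ and Φ := Π⁻¹, the symmetric block matrix with block rows [−Φ, 0, (A + B_uK)ᵀ, (C_z + D_zuK)ᵀ], [0, −η·I_m, B_wᵀ, D_zwᵀ], [A + B_uK, B_w, −Φ⁻¹, 0], [C_z + D_zuK, D_zw, 0, −I_p] is negative definite. -/
open Matrix

theorem Matrix.NegDef.transpose_mul_mul {ι : Type*} [Fintype ι] [DecidableEq ι]
    {M : Matrix ι ι ℝ} (hM : M.NegDef) {T : Matrix ι ι ℝ} (hT : IsUnit T) :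
    (Tᵀ * M * T).NegDef := by
  rw [NegDef, ← Matrix.neg_mul, ← Matrix.mul_neg]
  exact (IsUnit.posDef_star_left_conjugate_iff hT).mpr hM

theorem transpose_mul_blk4_mul_fromBlocks_one {R i1 i2 i3 i4 : Type*} [Semiring R]
    [Fintype i1] [Fintype i2] [Fintype i3] [Fintype i4]
    [DecidableEq i2] [DecidableEq i3] [DecidableEq i4] (X : Matrix i1 i1 R)
    (A11 : Matrix i1 i1 R) (A12 : Matrix i1 i2 R) (A13 : Matrix i1 i3 R) (A14 : Matrix i1 i4 R)
    (A21 : Matrix i2 i1 R) (A22 : Matrix i2 i2 R) (A23 : Matrix i2 i3 R) (A24 : Matrix i2 i4 R)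
    (A31 : Matrix i3 i1 R) (A32 : Matrix i3 i2 R) (A33 : Matrix i3 i3 R) (A34 : Matrix i3 i4 R)
    (A41 : Matrix i4 i1 R) (A42 : Matrix i4 i2 R) (A43 : Matrix i4 i3 R) (A44 : Matrix i4 i4 R) :
    (fromBlocks X 0 0 1)ᵀ * blk4 A11 A12 A13 A14 A21 A22 A23 A24 A31 A32 A33 A34 A41 A42 A43 A44 *
        fromBlocks X 0 0 1 =
      blk4 (Xᵀ * A11 * X) (Xᵀ * A12) (Xᵀ * A13) (Xᵀ * A14)
        (A21 * X) A22 A23 A24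
        (A31 * X) A32 A33 A34
        (A41 * X) A42 A43 A44 := by
  simp only [blk4, blk3, fromBlocks_transpose, fromBlocks_multiply, mul_fromCols, fromRows_mul,
    transpose_zero, transpose_one, Matrix.mul_zero, Matrix.zero_mul, Matrix.mul_one,
    Matrix.one_mul, add_zero, zero_add]

theorem Matrix.add_mul_mul_nonsing_inv {α m n k : Type*} [CommRing α] [Fintype n] [DecidableEq n]
    [Fintype k] {P : Matrix n n α} (hP : IsUnit P.det) (A : Matrix m n α) (B : Matrix m k α)
    (L : Matrix k n α) :
    (A * P + B * L) * P⁻¹ = A + B * (L * P⁻¹) := by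
  rw [Matrix.add_mul, Matrix.mul_assoc, mul_nonsing_inv P hP, Matrix.mul_one, Matrix.mul_assoc]

theorem state_feedback_synthesis_general
    (n m p q : ℕ) (A : Matrix (Fin n) (Fin n) ℝ) (Bw : Matrix (Fin n) (Fin m) ℝ)
    (Bu : Matrix (Fin n) (Fin q) ℝ) (Cz : Matrix (Fin p) (Fin n) ℝ)
    (Dzw : Matrix (Fin p) (Fin m) ℝ) (Dzu : Matrix (Fin p) (Fin q) ℝ) (η : ℝ)
    (Pi : Matrix (Fin n) (Fin n) ℝ) (hPi : Pi.PosDef)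
    (Λ : Matrix (Fin q) (Fin n) ℝ)
    (h2 : (blk4 (-Pi) 0 (A * Pi + Bu * Λ)ᵀ (Cz * Pi + Dzu * Λ)ᵀ
                0 ((-η) • 1 : Matrix (Fin m) (Fin m) ℝ) Bwᵀ Dzwᵀ
                (A * Pi + Bu * Λ) Bw (-Pi) 0
                (Cz * Pi + Dzu * Λ) Dzw 0 (-1)).NegDef)
    (K : Matrix (Fin q) (Fin n) ℝ) (hK : K = Λ * Pi⁻¹)
    (Φ : Matrix (Fin n) (Fin n) ℝ) (hΦ : Φ = Pi⁻¹) :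
    (blk4 (-Φ) 0 (A + Bu * K)ᵀ (Cz + Dzu * K)ᵀ
          0 ((-η) • 1 : Matrix (Fin m) (Fin m) ℝ) Bwᵀ Dzwᵀ
          (A + Bu * K) Bw (-Φ⁻¹) 0
          (Cz + Dzu * K) Dzw 0 (-1)).NegDef := by
  have hdet : IsUnit Pi.det := (isUnit_iff_isUnit_det Pi).mp hPi.isUnit
  have hinv_symm : Pi⁻¹ᵀ = Pi⁻¹ := isHermitian_iff_isSymm.mp hPi.inv.isHermitian
  have hT : IsUnit (fromBlocks Pi⁻¹ 0 0 1 :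
      Matrix (Fin n ⊕ (Fin m ⊕ (Fin n ⊕ Fin p))) (Fin n ⊕ (Fin m ⊕ (Fin n ⊕ Fin p))) ℝ) :=
    isUnit_fromBlocks_zero₂₁.mpr ⟨isUnit_nonsing_inv_iff.mpr hPi.isUnit, isUnit_one⟩
  -- The congruence by `diag(Π⁻¹, I)` undoes the change of variables `Λ = KΠ`, `Φ = Π⁻¹`.
  convert h2.transpose_mul_mul hT using 1
  rw [transpose_mul_blk4_mul_fromBlocks_one, ← transpose_mul, ← transpose_mul, add_mul_mul_nonsing_inv hdet,
    add_mul_mul_nonsing_inv hdet, hinv_symm, Matrix.mul_neg,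
    nonsing_inv_mul Pi hdet, Matrix.neg_mul, Matrix.one_mul, hΦ, nonsing_inv_nonsing_inv Pi hdet,
    hK]
  simp only [Matrix.mul_zero, Matrix.zero_mul]

/-- Static state-feedback synthesis: feasibility of the synthesis LMIs in `(Ψ, Π, Λ, η)` yields
the analysis LMI for the closed-loop realization with gain `K = ΛΠ⁻¹` and `Φ = Π⁻¹`.
Here `Pi` plays the role of `Π`. -/
theorem state_feedback_synthesis
    (n m p q : ℕ) (A : Matrix (Fin n) (Fin n) ℝ) (Bw : Matrix (Fin n) (Fin m) ℝ)
    (Bu : Matrix (Fin n) (Fin q) ℝ) (Cz : Matrix (Fin p) (Fin n) ℝ)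
    (Dzw : Matrix (Fin p) (Fin m) ℝ) (Dzu : Matrix (Fin p) (Fin q) ℝ) (η : ℝ)
    (Ψ : Matrix (Fin m) (Fin m) ℝ) (hΨs : Ψ.IsSymm) (hΨ : Ψ.PosDef)
    (Pi : Matrix (Fin n) (Fin n) ℝ) (hPis : Pi.IsSymm) (hPi : Pi.PosDef)
    (Λ : Matrix (Fin q) (Fin n) ℝ)
    (h1 : (blk3 (Ψ - η • 1) Bwᵀ Dzwᵀ
                Bw (-Pi) 0
                Dzw 0 (-1)).NegDef)
    (h2 : (blk4 (-Pi) 0 (A * Pi + Bu * Λ)ᵀ (Cz * Pi + Dzu * Λ)ᵀ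
                0 ((-η) • 1 : Matrix (Fin m) (Fin m) ℝ) Bwᵀ Dzwᵀ
                (A * Pi + Bu * Λ) Bw (-Pi) 0
                (Cz * Pi + Dzu * Λ) Dzw 0 (-1)).NegDef)
    (K : Matrix (Fin q) (Fin n) ℝ) (hK : K = Λ * Pi⁻¹)
    (Φ : Matrix (Fin n) (Fin n) ℝ) (hΦ : Φ = Pi⁻¹) :
    (blk4 (-Φ) 0 (A + Bu * K)ᵀ (Cz + Dzu * K)ᵀ
          0 ((-η) • 1 : Matrix (Fin m) (Fin m) ℝ) Bwᵀ Dzwᵀ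
          (A + Bu * K) Bw (-Φ⁻¹) 0
          (Cz + Dzu * K) Dzw 0 (-1)).NegDef :=
  state_feedback_synthesis_general n m p q A Bw Bu Cz Dzw Dzu η Pi hPi Λ h2 K hK Φ hΦ
end

section
/- Let Φ be a real symmetric positive definite n×n matrix, S an invertible real n×n matrix, Ψ a real symmetric m×m matrix, η a real number, 𝒜 a real n×n matrix, ℬ a real n×m matrix, 𝒞 a real p×n matrix, and 𝒟 a real p×m matrix. Then: (i) if the symmetric block matrix with block rows [Ψ − η·I_m, ℬᵀSᵀ, 𝒟ᵀ], [Sℬ, Φ − S − Sᵀ, 0], [𝒟, 0, −I_p] is negative definite, then the symmetric block matrix with block rows [Ψ − η·I_m, ℬᵀ, 𝒟ᵀ], [ℬ, −Φ⁻¹, 0], [𝒟, 0, −I_p] is negative definite; (ii) if the symmetric block matrix with block rows [−Φ, 0, 𝒜ᵀSᵀ, 𝒞ᵀ], [0, −η·I_m, ℬᵀSᵀ, 𝒟ᵀ], [S𝒜, Sℬ, Φ − S − Sᵀ, 0], [𝒞, 𝒟, 0, −I_p] is negative definite, then the symmetric block matrix with block rows [−Φ, 0, 𝒜ᵀ, 𝒞ᵀ],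 [0, −η·I_m, ℬᵀ, 𝒟ᵀ], [𝒜, ℬ, −Φ⁻¹, 0], [𝒞, 𝒟, 0, −I_p] is negative definite. -/
open Matrix

/-!
Put `K = 1 - S⁻¹ Φ`. Expanding `K Φ⁻¹ Kᵀ` gives `Φ⁻¹ = S⁻¹ (S + Sᵀ - Φ) S⁻ᵀ + K Φ⁻¹ Kᵀ`, so once the
slack row and column are moved to the last position, the matrix containing `-Φ⁻¹` is the congruence
of the slack matrix by `diag(I, S⁻ᵀ)` minus the positive semidefinite matrix `[0; K] Φ⁻¹ [0; K]ᵀ`.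
Negative definiteness therefore passes from the slack inequality to the one with `-Φ⁻¹`.
-/

section SlackElimination

variable {R ι κ : Type*} [Fintype ι] [Fintype κ] [DecidableEq ι] [DecidableEq κ]

theorem Matrix.nonsing_inv_mul_slack_mul_eq [CommRing R] {Φ S : Matrix κ κ R}
    (hΦ : IsUnit Φ) (hS : IsUnit S) (hΦs : Φᵀ = Φ) :
    S⁻¹ * (Φ - S - Sᵀ) * S⁻¹ᵀ = -Φ⁻¹ + (1 - S⁻¹ * Φ) * Φ⁻¹ * (1 - S⁻¹ * Φ)ᵀ := by
  rw [isUnit_iff_isUnit_det] at hΦ hS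
  have hSt : IsUnit Sᵀ.det := by rwa [det_transpose]
  simp only [transpose_sub, transpose_one, transpose_mul, hΦs, transpose_nonsing_inv,
    Matrix.mul_sub, Matrix.sub_mul, Matrix.mul_one, Matrix.one_mul, Matrix.mul_assoc,
    nonsing_inv_mul_cancel_left Φ _ hΦ, nonsing_inv_mul_cancel_left S _ hS,
    mul_nonsing_inv _ hΦ, mul_nonsing_inv _ hSt]
  abel

theorem Matrix.slack_congr_eq_fromBlocks_add [CommRing R] {Q : Matrix ι ι R}
    {G : Matrix κ ι R} {Φ S : Matrix κ κ R} (hΦ : IsUnit Φ) (hS : IsUnit S) (hΦs : Φᵀ = Φ) :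
    (fromBlocks 1 0 0 S⁻¹ᵀ)ᵀ * fromBlocks Q (Gᵀ * Sᵀ) (S * G) (Φ - S - Sᵀ) *
        fromBlocks 1 0 0 S⁻¹ᵀ =
      fromBlocks Q Gᵀ G (-Φ⁻¹) +
        fromRows 0 (1 - S⁻¹ * Φ) * Φ⁻¹ * (fromRows 0 (1 - S⁻¹ * Φ))ᵀ := by
  have hSd : IsUnit S.det := (isUnit_iff_isUnit_det S).1 hS
  have hSt : Sᵀ * S⁻¹ᵀ = 1 := by rw [← transpose_mul, nonsing_inv_mul S hSd, transpose_one]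
  rw [transpose_fromRows, fromRows_mul, fromRows_mul_fromCols]
  simp only [fromBlocks_transpose, fromBlocks_multiply, fromBlocks_add, transpose_one,
    transpose_zero, transpose_transpose, Matrix.mul_one, Matrix.one_mul, Matrix.mul_zero,
    Matrix.zero_mul, add_zero, zero_add, Matrix.mul_assoc, hSt,
    nonsing_inv_mul_cancel_left S _ hSd]
  congr 1
  simpa only [Matrix.mul_assoc] using nonsing_inv_mul_slack_mul_eq hΦ hS hΦs

theorem Matrix.NegDef.fromBlocks_neg_nonsing_inv_of_slack {Q : Matrix ι ι ℝ} {G : Matrix κ ι ℝ}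
    {Φ S : Matrix κ κ ℝ} (hΦ : Φ.PosDef) (hS : IsUnit S)
    (h : (fromBlocks Q (Gᵀ * Sᵀ) (S * G) (Φ - S - Sᵀ)).NegDef) :
    (fromBlocks Q Gᵀ G (-Φ⁻¹)).NegDef := by
  have hT : IsUnit (fromBlocks 1 0 0 S⁻¹ᵀ : Matrix (ι ⊕ κ) (ι ⊕ κ) ℝ) := by
    simpa [isUnit_iff_isUnit_det, det_fromBlocks_zero₂₁] using
      isUnit_nonsing_inv_det S ((isUnit_iff_isUnit_det S).1 hS)
  have hsum := (h.conjTranspose_mul_mul_same (mulVec_injective_of_isUnit hT)).add_posSemidef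
    (hΦ.inv.posSemidef.mul_mul_conjTranspose_same (fromRows 0 (1 - S⁻¹ * Φ)))
  rwa [conjTranspose_eq_transpose_of_trivial, Matrix.mul_neg, Matrix.neg_mul,
    slack_congr_eq_fromBlocks_add hΦ.isUnit hS (isHermitian_iff_isSymm.1 hΦ.isHermitian).eq,
    conjTranspose_eq_transpose_of_trivial, neg_add, neg_add_cancel_right] at hsum

end SlackElimination

section Reindexing

variable {i1 i2 i3 i4 : Type*} [Fintype i1] [Fintype i2] [Fintype i3] [Fintype i4]

theorem Matrix.negDef_submatrix_equiv {m n : Type*} [Fintype m] [Fintype n] {M : Matrix n n ℝ}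
    (e : m ≃ n) : (M.submatrix e e).NegDef ↔ M.NegDef := by
  refine ⟨fun h ↦ ?_, fun h ↦ h.submatrix e.injective⟩
  simpa [NegDef] using PosDef.submatrix (M := (-M).submatrix e e) h e.symm.injective

theorem negDef_blk3_iff_fromBlocks (A11 : Matrix i1 i1 ℝ) (A12 : Matrix i1 i2 ℝ)
    (A13 : Matrix i1 i3 ℝ) (A21 : Matrix i2 i1 ℝ) (A22 : Matrix i2 i2 ℝ) (A23 : Matrix i2 i3 ℝ)
    (A31 : Matrix i3 i1 ℝ) (A32 : Matrix i3 i2 ℝ) (A33 : Matrix i3 i3 ℝ) :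
    (blk3 A11 A12 A13 A21 A22 A23 A31 A32 A33).NegDef ↔
      (fromBlocks (fromBlocks A11 A13 A31 A33) (fromRows A12 A32) (fromCols A21 A23) A22).NegDef := by
  rw [← negDef_submatrix_equiv ((Equiv.sumAssoc i1 i3 i2).trans
    (Equiv.sumCongr (Equiv.refl i1) (Equiv.sumComm i3 i2)))]
  congr! 1
  ext ((i | i) | i) ((j | j) | j) <;> rfl

theorem negDef_blk4_iff_fromBlocks (A11 : Matrix i1 i1 ℝ) (A12 : Matrix i1 i2 ℝ)
    (A13 : Matrix i1 i3 ℝ) (A14 : Matrix i1 i4 ℝ) (A21 : Matrix i2 i1 ℝ) (A22 : Matrix i2 i2 ℝ)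
    (A23 : Matrix i2 i3 ℝ) (A24 : Matrix i2 i4 ℝ) (A31 : Matrix i3 i1 ℝ) (A32 : Matrix i3 i2 ℝ)
    (A33 : Matrix i3 i3 ℝ) (A34 : Matrix i3 i4 ℝ) (A41 : Matrix i4 i1 ℝ) (A42 : Matrix i4 i2 ℝ)
    (A43 : Matrix i4 i3 ℝ) (A44 : Matrix i4 i4 ℝ) :
    (blk4 A11 A12 A13 A14 A21 A22 A23 A24 A31 A32 A33 A34 A41 A42 A43 A44).NegDef ↔
      (fromBlocks (blk3 A11 A12 A14 A21 A22 A24 A41 A42 A44) (fromRows A13 (fromRows A23 A43))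
        (fromCols A31 (fromCols A32 A34)) A33).NegDef := by
  rw [← negDef_submatrix_equiv ((Equiv.sumAssoc i1 (i2 ⊕ i4) i3).trans
    (Equiv.sumCongr (Equiv.refl i1) ((Equiv.sumAssoc i2 i4 i3).trans
      (Equiv.sumCongr (Equiv.refl i2) (Equiv.sumComm i4 i3)))))]
  congr! 1
  ext ((i | i | i) | i) ((j | j | j) | j) <;> rfl

end Reindexing

theorem slack_lmi_implications_general
    (n m p : ℕ) (Φ : Matrix (Fin n) (Fin n) ℝ) (hΦ : Φ.PosDef)
    (S : Matrix (Fin n) (Fin n) ℝ) (hS : IsUnit S)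
    (Ψ : Matrix (Fin m) (Fin m) ℝ) (η : ℝ)
    (𝒜 : Matrix (Fin n) (Fin n) ℝ) (ℬ : Matrix (Fin n) (Fin m) ℝ)
    (𝒞 : Matrix (Fin p) (Fin n) ℝ) (𝒟 : Matrix (Fin p) (Fin m) ℝ) :
    ((blk3 (Ψ - η • 1) (ℬᵀ * Sᵀ) 𝒟ᵀ
           (S * ℬ) (Φ - S - Sᵀ) 0
           𝒟 0 (-1)).NegDef →
      (blk3 (Ψ - η • 1) ℬᵀ 𝒟ᵀ
            ℬ (-Φ⁻¹) 0
            𝒟 0 (-1)).NegDef) ∧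
    ((blk4 (-Φ) 0 (𝒜ᵀ * Sᵀ) 𝒞ᵀ
           0 ((-η) • 1 : Matrix (Fin m) (Fin m) ℝ) (ℬᵀ * Sᵀ) 𝒟ᵀ
           (S * 𝒜) (S * ℬ) (Φ - S - Sᵀ) 0
           𝒞 𝒟 0 (-1)).NegDef →
      (blk4 (-Φ) 0 𝒜ᵀ 𝒞ᵀ
            0 ((-η) • 1 : Matrix (Fin m) (Fin m) ℝ) ℬᵀ 𝒟ᵀ
            𝒜 ℬ (-Φ⁻¹) 0
            𝒞 𝒟 0 (-1)).NegDef) := by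
  constructor
  · intro h
    rw [negDef_blk3_iff_fromBlocks] at h ⊢
    have key := NegDef.fromBlocks_neg_nonsing_inv_of_slack
      (Q := fromBlocks (Ψ - η • 1) 𝒟ᵀ 𝒟 (-1)) (G := fromCols ℬ 0) hΦ hS
    simp only [transpose_fromCols, transpose_zero, fromRows_mul, mul_fromCols, Matrix.zero_mul,
      Matrix.mul_zero] at key
    exact key h
  · intro h
    rw [negDef_blk4_iff_fromBlocks] at h ⊢
    have key := NegDef.fromBlocks_neg_nonsing_inv_of_slack
      (Q := blk3 (-Φ) 0 𝒞ᵀ 0 ((-η) • 1) 𝒟ᵀ 𝒞 𝒟 (-1)) (G := fromCols 𝒜 (fromCols ℬ 0)) hΦ hS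
    simp only [transpose_fromCols, transpose_zero, fromRows_mul, mul_fromCols, Matrix.zero_mul,
      Matrix.mul_zero] at key
    exact key h

/-- Replacing the slack-variable LMIs (with slack matrix `S` applied on the left) by the
corresponding LMIs with `−Φ⁻¹`. -/
theorem slack_lmi_implications
    (n m p : ℕ) (Φ : Matrix (Fin n) (Fin n) ℝ) (hΦs : Φ.IsSymm) (hΦ : Φ.PosDef)
    (S : Matrix (Fin n) (Fin n) ℝ) (hS : IsUnit S)
    (Ψ : Matrix (Fin m) (Fin m) ℝ) (hΨs : Ψ.IsSymm) (η : ℝ)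
    (𝒜 : Matrix (Fin n) (Fin n) ℝ) (ℬ : Matrix (Fin n) (Fin m) ℝ)
    (𝒞 : Matrix (Fin p) (Fin n) ℝ) (𝒟 : Matrix (Fin p) (Fin m) ℝ) :
    ((blk3 (Ψ - η • 1) (ℬᵀ * Sᵀ) 𝒟ᵀ
           (S * ℬ) (Φ - S - Sᵀ) 0
           𝒟 0 (-1)).NegDef →
      (blk3 (Ψ - η • 1) ℬᵀ 𝒟ᵀ
            ℬ (-Φ⁻¹) 0
            𝒟 0 (-1)).NegDef) ∧
    ((blk4 (-Φ) 0 (𝒜ᵀ * Sᵀ) 𝒞ᵀ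
           0 ((-η) • 1 : Matrix (Fin m) (Fin m) ℝ) (ℬᵀ * Sᵀ) 𝒟ᵀ
           (S * 𝒜) (S * ℬ) (Φ - S - Sᵀ) 0
           𝒞 𝒟 0 (-1)).NegDef →
      (blk4 (-Φ) 0 𝒜ᵀ 𝒞ᵀ
            0 ((-η) • 1 : Matrix (Fin m) (Fin m) ℝ) ℬᵀ 𝒟ᵀ
            𝒜 ℬ (-Φ⁻¹) 0
            𝒞 𝒟 0 (-1)).NegDef) :=
  slack_lmi_implications_general n m p Φ hΦ S hS Ψ η 𝒜 ℬ 𝒞 𝒟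
end

section
/- Let Π be a real symmetric positive definite n×n matrix, R an invertible real n×n matrix, η a real number, 𝒜 a real n×n matrix, ℬ a real n×m matrix, 𝒞 a real p×n matrix, and 𝒟 a real p×m matrix. If the symmetric block matrix with block rows [Π − R − Rᵀ, 0, Rᵀ𝒜ᵀ, Rᵀ𝒞ᵀ], [0, −η·I_m, ℬᵀ, 𝒟ᵀ], [𝒜R, ℬ, −Π, 0], [𝒞R, 𝒟, 0, −I_p] is negative definite, then the symmetric block matrix with block rows [−Π⁻¹, 0, 𝒜ᵀ, 𝒞ᵀ], [0, −η·I_m, ℬᵀ, 𝒟ᵀ], [𝒜, ℬ, −Π, 0], [𝒞, 𝒟, 0, −I_p] is negative definite. -/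
open Matrix

/-!
Completing the square, `Rᵀ Π⁻¹ R - R - Rᵀ + Π = (R - Π)ᵀ Π⁻¹ (R - Π) ⪰ 0`, so replacing the `(1,1)`
block `Π - R - Rᵀ` of the hypothesis by the smaller `-Rᵀ Π⁻¹ R` keeps it negative definite. The matrix
obtained this way is the congruence of the conclusion's matrix by `diag(R, I)`, and congruence by an
invertible matrix preserves negative definiteness.
-/

namespace Matrix

variable {m n : Type*} [Fintype m] [Fintype n]

theorem PosDef.posSemidef_conjTranspose_mul_inv_mul_sub {K : Type*} [Field K] [PartialOrder K]
    [StarRing K] [DecidableEq n] {P : Matrix n n K} (hP : P.PosDef) (R : Matrix n n K) :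
    (Rᴴ * P⁻¹ * R - (R + Rᴴ - P)).PosSemidef := by
  have := hP.isUnit.invertible
  convert hP.inv.posSemidef.conjTranspose_mul_mul_same (R - P) using 1
  simp only [conjTranspose_sub, hP.isHermitian.eq, Matrix.sub_mul, Matrix.mul_sub,
    Matrix.mul_assoc, mul_inv_of_invertible, inv_mul_of_invertible, Matrix.one_mul, Matrix.mul_one]
  abel

theorem PosSemidef.fromBlocks_zeros {R : Type*} [Ring R] [PartialOrder R] [StarRing R]
    [DecidableEq m] {A : Matrix m m R} (hA : A.PosSemidef) :
    (fromBlocks A 0 0 (0 : Matrix n n R)).PosSemidef := by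
  have h := hA.conjTranspose_mul_mul_same (fromCols (1 : Matrix m m R) (0 : Matrix m n R))
  rw [conjTranspose_fromCols_eq_fromRows_conjTranspose, fromRows_mul, fromRows_mul_fromCols] at h
  simpa only [conjTranspose_one, conjTranspose_zero, Matrix.one_mul, Matrix.mul_one,
    Matrix.zero_mul, Matrix.mul_zero] using h

theorem transpose_fromBlocks_mul_fromBlocks_mul_fromBlocks {α : Type*} [Semiring α]
    [DecidableEq n] (T : Matrix m m α) (A : Matrix m m α) (B : Matrix m n α)
    (C : Matrix n m α) (D : Matrix n n α) :
    (fromBlocks T 0 0 1)ᵀ * fromBlocks A B C D * fromBlocks T 0 0 1 =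
      fromBlocks (Tᵀ * A * T) (Tᵀ * B) (C * T) D := by
  simp [fromBlocks_transpose, fromBlocks_multiply]

theorem NegDef.sub_posSemidef {M P : Matrix n n ℝ} (hM : M.NegDef) (hP : P.PosSemidef) :
    (M - P).NegDef := by
  rw [NegDef, neg_sub', sub_neg_eq_add]
  exact hM.add_posSemidef hP

theorem negDef_transpose_mul_mul_iff [DecidableEq n] {U M : Matrix n n ℝ} (hU : IsUnit U) :
    (Uᵀ * M * U).NegDef ↔ M.NegDef := by
  rw [NegDef, NegDef, ← Matrix.neg_mul, ← Matrix.mul_neg, ← conjTranspose_eq_transpose_of_trivial]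
  exact IsUnit.posDef_star_left_conjugate_iff hU

end Matrix

theorem slack_lmi_right_implication_general
    (n m p : ℕ) (Pi : Matrix (Fin n) (Fin n) ℝ) (hPi : Pi.PosDef)
    (R : Matrix (Fin n) (Fin n) ℝ) (hR : IsUnit R) (η : ℝ)
    (𝒜 : Matrix (Fin n) (Fin n) ℝ) (ℬ : Matrix (Fin n) (Fin m) ℝ)
    (𝒞 : Matrix (Fin p) (Fin n) ℝ) (𝒟 : Matrix (Fin p) (Fin m) ℝ)
    (h : (blk4 (Pi - R - Rᵀ) 0 (Rᵀ * 𝒜ᵀ) (Rᵀ * 𝒞ᵀ)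
               0 ((-η) • 1 : Matrix (Fin m) (Fin m) ℝ) ℬᵀ 𝒟ᵀ
               (𝒜 * R) ℬ (-Pi) 0
               (𝒞 * R) 𝒟 0 (-1)).NegDef) :
    (blk4 (-Pi⁻¹) 0 𝒜ᵀ 𝒞ᵀ
          0 ((-η) • 1 : Matrix (Fin m) (Fin m) ℝ) ℬᵀ 𝒟ᵀ
          𝒜 ℬ (-Pi) 0
          𝒞 𝒟 0 (-1)).NegDef := by
  have hslack := hPi.posSemidef_conjTranspose_mul_inv_mul_sub R
  rw [conjTranspose_eq_transpose_of_trivial] at hslack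
  have hS : IsUnit (fromBlocks R 0 0 1 :
      Matrix (Fin n ⊕ (Fin m ⊕ (Fin n ⊕ Fin p))) (Fin n ⊕ (Fin m ⊕ (Fin n ⊕ Fin p))) ℝ) :=
    isUnit_fromBlocks_zero₂₁.mpr ⟨hR, isUnit_one⟩
  rw [← negDef_transpose_mul_mul_iff hS, blk4, transpose_fromBlocks_mul_fromBlocks_mul_fromBlocks]
  convert h.sub_posSemidef hslack.fromBlocks_zeros using 1
  rw [blk4, sub_eq_add_neg, fromBlocks_neg, fromBlocks_add]
  simp only [neg_zero, add_zero]
  congr 1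
  · simp only [Matrix.mul_neg, Matrix.neg_mul]; abel
  · simp [mul_fromCols]
  · simp [fromRows_mul]

/-- Replacing the slack-variable LMI (with slack matrix `R` applied on the right) by the
corresponding LMI with `−Π⁻¹`. Here `Pi` plays the role of `Π`. -/
theorem slack_lmi_right_implication
    (n m p : ℕ) (Pi : Matrix (Fin n) (Fin n) ℝ) (hPis : Pi.IsSymm) (hPi : Pi.PosDef)
    (R : Matrix (Fin n) (Fin n) ℝ) (hR : IsUnit R) (η : ℝ)
    (𝒜 : Matrix (Fin n) (Fin n) ℝ) (ℬ : Matrix (Fin n) (Fin m) ℝ)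
    (𝒞 : Matrix (Fin p) (Fin n) ℝ) (𝒟 : Matrix (Fin p) (Fin m) ℝ)
    (h : (blk4 (Pi - R - Rᵀ) 0 (Rᵀ * 𝒜ᵀ) (Rᵀ * 𝒞ᵀ)
               0 ((-η) • 1 : Matrix (Fin m) (Fin m) ℝ) ℬᵀ 𝒟ᵀ
               (𝒜 * R) ℬ (-Pi) 0
               (𝒞 * R) 𝒟 0 (-1)).NegDef) :
    (blk4 (-Pi⁻¹) 0 𝒜ᵀ 𝒞ᵀ
          0 ((-η) • 1 : Matrix (Fin m) (Fin m) ℝ) ℬᵀ 𝒟ᵀ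
          𝒜 ℬ (-Pi) 0
          𝒞 𝒟 0 (-1)).NegDef :=
  slack_lmi_right_implication_general n m p Pi hPi R hR η 𝒜 ℬ 𝒞 𝒟 h
end

section
/- Let A (n×n), B_w (n×m), B_u (n×q), C_z (p×n), D_zw (p×m), C_y (r×n), D_yw (r×m) be real matrices of a plant with D_zu = 0, and let T_u be an invertible real n×n matrix with T_u B_u = [[I_q], [0]]. Set Ā := T_u A T_u⁻¹, B̄_w := T_u B_w, C̄_z := C_z T_u⁻¹, C̄_y := C_y T_u⁻¹. Let η be a real number, Ψ a real symmetric positive definite m×m matrix, Φ̄ a real symmetric positive definite n×n matrix, S̄ the block-diagonal real n×n matrix with diagonal blocks S̄₁ (q×q, invertible) and S̄₂ ((n−q)×(n−q), invertible), and L := [[L₁], [0]] a real n×r matrix with top block L₁ (q×r). Suppose the symmetric block matrix with block rows [Ψ − η·I_m, (S̄B̄_w + LD_yw)ᵀ, D_zwᵀ], [S̄B̄_w + LD_yw, Φ̄ − S̄ − S̄ᵀ, 0], [D_zw, 0, −I_p] is negative definite, and the symmetric block matrix with block rows [−Φ̄, 0, (S̄Ā + LC̄_y)ᵀ, C̄_zᵀ],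 [0, −η·I_m, (S̄B̄_w + LD_yw)ᵀ, D_zwᵀ], [S̄Ā + LC̄_y, S̄B̄_w + LD_yw, Φ̄ − S̄ − S̄ᵀ, 0], [C̄_z, D_zw, 0, −I_p] is negative definite. Then, with K := S̄₁⁻¹L₁, Φ := T_uᵀ Φ̄ T_u, 𝒜 := A + B_uKC_y, ℬ := B_w + B_uKD_yw, 𝒞 := C_z, 𝒟 := D_zw, the matrix Φ is symmetric positive definite, the symmetric block matrix with block rows [Ψ − η·I_m, ℬᵀ, 𝒟ᵀ], [ℬ, −Φ⁻¹, 0], [𝒟, 0, −I_p] is negative definite, and the symmetric block matrix with block rows [−Φ, 0, 𝒜ᵀ, 𝒞ᵀ], [0, −η·I_m, ℬᵀ, 𝒟ᵀ], [𝒜, ℬ, −Φ⁻¹, 0], [𝒞, 𝒟, 0, −I_p] is negative definite. -/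
open Matrix

/-! The gain is chosen so that `S̄ T_u B_u K = L`, hence `S̄ B̄_w + L D_yw = S̄ T_u ℬ` and
`S̄ Ā + L C̄_y = S̄ T_u 𝒜 T_u⁻¹`. Since `Φ̄ - S̄ - S̄ᵀ + S̄ Φ̄⁻¹ S̄ᵀ = (S̄ - Φ̄) Φ̄⁻¹ (S̄ - Φ̄)ᵀ ⪰ 0`,
replacing the block `Φ̄ - S̄ - S̄ᵀ` of either synthesis LMI by `-S̄ Φ̄⁻¹ S̄ᵀ` keeps it negative
definite. The congruences `diag(I, W, I)` and `diag(T_u, I, W, I)` with `W = (S̄ T_u)⁻ᵀ` then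
produce the analysis LMIs, because `Wᵀ S̄ Φ̄⁻¹ S̄ᵀ W = (T_uᵀ Φ̄ T_u)⁻¹ = Φ⁻¹`. -/

namespace Matrix

section Blocks

variable {R i1 i2 i3 i4 j1 j2 j3 j4 : Type*}

theorem blk3_diag [Zero R] (P1 : Matrix i1 j1 R) (P2 : Matrix i2 j2 R) (P3 : Matrix i3 j3 R) :
    blk3 P1 0 0 0 P2 0 0 0 P3 = fromBlocks P1 0 0 (fromBlocks P2 0 0 P3) := by
  ext (_ | _ | _) (_ | _ | _) <;> rfl

theorem blk4_diag [Zero R] (P1 : Matrix i1 j1 R) (P2 : Matrix i2 j2 R) (P3 : Matrix i3 j3 R)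
    (P4 : Matrix i4 j4 R) :
    blk4 P1 0 0 0 0 P2 0 0 0 0 P3 0 0 0 0 P4 = fromBlocks P1 0 0 (blk3 P2 0 0 0 P3 0 0 0 P4) := by
  ext (_ | _ | _ | _) (_ | _ | _ | _) <;> rfl

theorem blk3_sub_blk3_middle [AddGroup R]
    (A11 : Matrix i1 i1 R) (A12 : Matrix i1 i2 R) (A13 : Matrix i1 i3 R)
    (A21 : Matrix i2 i1 R) (A22 A22' : Matrix i2 i2 R) (A23 : Matrix i2 i3 R)
    (A31 : Matrix i3 i1 R) (A32 : Matrix i3 i2 R) (A33 : Matrix i3 i3 R) :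
    blk3 A11 A12 A13 A21 A22 A23 A31 A32 A33 - blk3 A11 A12 A13 A21 A22' A23 A31 A32 A33 =
      fromBlocks 0 0 0 (fromBlocks (A22 - A22') 0 0 0) := by
  ext (_ | _ | _) (_ | _ | _) <;> simp [blk3]

theorem blk4_sub_blk4_third [AddGroup R]
    (A11 : Matrix i1 i1 R) (A12 : Matrix i1 i2 R) (A13 : Matrix i1 i3 R) (A14 : Matrix i1 i4 R)
    (A21 : Matrix i2 i1 R) (A22 : Matrix i2 i2 R) (A23 : Matrix i2 i3 R) (A24 : Matrix i2 i4 R)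
    (A31 : Matrix i3 i1 R) (A32 : Matrix i3 i2 R) (A33 A33' : Matrix i3 i3 R)
    (A34 : Matrix i3 i4 R)
    (A41 : Matrix i4 i1 R) (A42 : Matrix i4 i2 R) (A43 : Matrix i4 i3 R) (A44 : Matrix i4 i4 R) :
    blk4 A11 A12 A13 A14 A21 A22 A23 A24 A31 A32 A33 A34 A41 A42 A43 A44 -
        blk4 A11 A12 A13 A14 A21 A22 A23 A24 A31 A32 A33' A34 A41 A42 A43 A44 =
      fromBlocks 0 0 0 (fromBlocks 0 0 0 (fromBlocks (A33 - A33') 0 0 0)) := by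
  ext (_ | _ | _ | _) (_ | _ | _ | _) <;> simp [blk4, blk3]

variable [CommRing R] [Fintype i1] [Fintype i2] [Fintype i3] [Fintype i4]

theorem transpose_fromBlocks_diag_mul_mul (P : Matrix i1 j1 R) (Q : Matrix i2 j2 R)
    (A : Matrix i1 i1 R) (B : Matrix i1 i2 R) (C : Matrix i2 i1 R) (D : Matrix i2 i2 R) :
    (fromBlocks P 0 0 Q)ᵀ * fromBlocks A B C D * fromBlocks P 0 0 Q =
      fromBlocks (Pᵀ * A * P) (Pᵀ * B * Q) (Qᵀ * C * P) (Qᵀ * D * Q) := by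
  simp [fromBlocks_transpose, fromBlocks_multiply]

theorem blk3_diag_transpose_mul_mul (P1 : Matrix i1 j1 R) (P2 : Matrix i2 j2 R)
    (P3 : Matrix i3 j3 R)
    (A11 : Matrix i1 i1 R) (A12 : Matrix i1 i2 R) (A13 : Matrix i1 i3 R)
    (A21 : Matrix i2 i1 R) (A22 : Matrix i2 i2 R) (A23 : Matrix i2 i3 R)
    (A31 : Matrix i3 i1 R) (A32 : Matrix i3 i2 R) (A33 : Matrix i3 i3 R) :
    (blk3 P1 0 0 0 P2 0 0 0 P3)ᵀ * blk3 A11 A12 A13 A21 A22 A23 A31 A32 A33 *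
        blk3 P1 0 0 0 P2 0 0 0 P3 =
      blk3 (P1ᵀ * A11 * P1) (P1ᵀ * A12 * P2) (P1ᵀ * A13 * P3)
        (P2ᵀ * A21 * P1) (P2ᵀ * A22 * P2) (P2ᵀ * A23 * P3)
        (P3ᵀ * A31 * P1) (P3ᵀ * A32 * P2) (P3ᵀ * A33 * P3) := by
  rw [blk3_diag, blk3, blk3, transpose_fromBlocks_diag_mul_mul, transpose_fromBlocks_diag_mul_mul]
  simp [fromBlocks_transpose, fromCols_mul_fromBlocks, fromBlocks_mul_fromRows, Matrix.mul_assoc]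

theorem blk4_diag_transpose_mul_mul (P1 : Matrix i1 j1 R) (P2 : Matrix i2 j2 R)
    (P3 : Matrix i3 j3 R) (P4 : Matrix i4 j4 R)
    (A11 : Matrix i1 i1 R) (A12 : Matrix i1 i2 R) (A13 : Matrix i1 i3 R) (A14 : Matrix i1 i4 R)
    (A21 : Matrix i2 i1 R) (A22 : Matrix i2 i2 R) (A23 : Matrix i2 i3 R) (A24 : Matrix i2 i4 R)
    (A31 : Matrix i3 i1 R) (A32 : Matrix i3 i2 R) (A33 : Matrix i3 i3 R) (A34 : Matrix i3 i4 R)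
    (A41 : Matrix i4 i1 R) (A42 : Matrix i4 i2 R) (A43 : Matrix i4 i3 R) (A44 : Matrix i4 i4 R) :
    (blk4 P1 0 0 0 0 P2 0 0 0 0 P3 0 0 0 0 P4)ᵀ *
        blk4 A11 A12 A13 A14 A21 A22 A23 A24 A31 A32 A33 A34 A41 A42 A43 A44 *
        blk4 P1 0 0 0 0 P2 0 0 0 0 P3 0 0 0 0 P4 =
      blk4 (P1ᵀ * A11 * P1) (P1ᵀ * A12 * P2) (P1ᵀ * A13 * P3) (P1ᵀ * A14 * P4)
        (P2ᵀ * A21 * P1) (P2ᵀ * A22 * P2) (P2ᵀ * A23 * P3) (P2ᵀ * A24 * P4)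
        (P3ᵀ * A31 * P1) (P3ᵀ * A32 * P2) (P3ᵀ * A33 * P3) (P3ᵀ * A34 * P4)
        (P4ᵀ * A41 * P1) (P4ᵀ * A42 * P2) (P4ᵀ * A43 * P3) (P4ᵀ * A44 * P4) := by
  rw [blk4_diag, blk4, blk4, transpose_fromBlocks_diag_mul_mul, blk3_diag_transpose_mul_mul,
    blk3_diag]
  simp [fromBlocks_transpose, fromCols_mul_fromBlocks, fromBlocks_mul_fromRows, Matrix.mul_assoc]

theorem isUnit_blk3_diag {P1 : Matrix i1 i1 R} {P2 : Matrix i2 i2 R} {P3 : Matrix i3 i3 R}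
    [DecidableEq i1] [DecidableEq i2] [DecidableEq i3]
    (h1 : IsUnit P1) (h2 : IsUnit P2) (h3 : IsUnit P3) : IsUnit (blk3 P1 0 0 0 P2 0 0 0 P3) := by
  rw [blk3_diag]
  exact isUnit_fromBlocks_zero₂₁.2 ⟨h1, isUnit_fromBlocks_zero₂₁.2 ⟨h2, h3⟩⟩

theorem isUnit_blk4_diag {P1 : Matrix i1 i1 R} {P2 : Matrix i2 i2 R} {P3 : Matrix i3 i3 R}
    {P4 : Matrix i4 i4 R} [DecidableEq i1] [DecidableEq i2] [DecidableEq i3] [DecidableEq i4]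
    (h1 : IsUnit P1) (h2 : IsUnit P2) (h3 : IsUnit P3) (h4 : IsUnit P4) :
    IsUnit (blk4 P1 0 0 0 0 P2 0 0 0 0 P3 0 0 0 0 P4) := by
  rw [blk4_diag]
  exact isUnit_fromBlocks_zero₂₁.2 ⟨h1, isUnit_blk3_diag h2 h3 h4⟩

end Blocks

section Definiteness

variable {m n : Type*} [Fintype m] [Fintype n]

theorem PosSemidef.fromBlocks_zero {R : Type*} [CommRing R] [PartialOrder R] [StarRing R]
    [StarOrderedRing R] {A : Matrix m m R} {D : Matrix n n R}
    (hA : A.PosSemidef) (hD : D.PosSemidef) : (fromBlocks A 0 0 D).PosSemidef := by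
  refine posSemidef_iff_dotProduct_mulVec.2 ⟨hA.1.fromBlocks (by simp) hD.1, fun x => ?_⟩
  rw [← Sum.elim_comp_inl_inr x, fromBlocks_mulVec]
  simp only [zero_mulVec, add_zero, zero_add, Sum.elim_comp_inl, Sum.elim_comp_inr,
    Function.star_sumElim, sumElim_dotProduct_sumElim]
  exact add_nonneg (hA.dotProduct_mulVec_nonneg _) (hD.dotProduct_mulVec_nonneg _)

theorem NegDef.of_posSemidef_sub {M M' : Matrix n n ℝ} (hM : M.NegDef)
    (h : (M - M').PosSemidef) : M'.NegDef := by
  unfold NegDef at *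
  convert hM.add_posSemidef h using 1
  abel

theorem NegDef.transpose_mul_mul_same [DecidableEq n] {M U : Matrix n n ℝ} (hM : M.NegDef)
    (hU : IsUnit U) : (Uᵀ * M * U).NegDef := by
  simpa [NegDef, star_eq_conjTranspose] using hU.posDef_star_left_conjugate_iff.2 hM

theorem PosDef.posSemidef_sub_sub_add_mul_inv_mul_transpose [DecidableEq n] {Φ : Matrix n n ℝ}
    (hΦ : Φ.PosDef) (S : Matrix n n ℝ) : (Φ - S - Sᵀ + S * Φ⁻¹ * Sᵀ).PosSemidef := by
  have := hΦ.isUnit.invertible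
  have hΦt : Φᵀ = Φ := by simpa using hΦ.1.eq
  have hsquare : Φ - S - Sᵀ + S * Φ⁻¹ * Sᵀ = (S - Φ) * Φ⁻¹ * (S - Φ)ᵀ := by
    simp only [transpose_sub, hΦt, Matrix.sub_mul, Matrix.mul_sub, mul_inv_of_invertible,
      inv_mul_cancel_right_of_invertible, Matrix.one_mul]
    abel
  rw [hsquare, ← conjTranspose_eq_transpose_of_trivial]
  exact hΦ.inv.posSemidef.mul_mul_conjTranspose_same (S - Φ)

end Definiteness

section BlockDefiniteness

variable {i1 i2 i3 i4 : Type*} [Fintype i1] [Fintype i2] [Fintype i3] [Fintype i4]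

theorem NegDef.blk3_of_posSemidef_sub_middle
    {A11 : Matrix i1 i1 ℝ} {A12 : Matrix i1 i2 ℝ} {A13 : Matrix i1 i3 ℝ}
    {A21 : Matrix i2 i1 ℝ} {A22 A22' : Matrix i2 i2 ℝ} {A23 : Matrix i2 i3 ℝ}
    {A31 : Matrix i3 i1 ℝ} {A32 : Matrix i3 i2 ℝ} {A33 : Matrix i3 i3 ℝ}
    (h : (blk3 A11 A12 A13 A21 A22 A23 A31 A32 A33).NegDef) (h22 : (A22 - A22').PosSemidef) :
    (blk3 A11 A12 A13 A21 A22' A23 A31 A32 A33).NegDef :=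
  h.of_posSemidef_sub <| by
    rw [blk3_sub_blk3_middle]
    exact .fromBlocks_zero .zero (.fromBlocks_zero h22 .zero)

theorem NegDef.blk4_of_posSemidef_sub_third
    {A11 : Matrix i1 i1 ℝ} {A12 : Matrix i1 i2 ℝ} {A13 : Matrix i1 i3 ℝ} {A14 : Matrix i1 i4 ℝ}
    {A21 : Matrix i2 i1 ℝ} {A22 : Matrix i2 i2 ℝ} {A23 : Matrix i2 i3 ℝ} {A24 : Matrix i2 i4 ℝ}
    {A31 : Matrix i3 i1 ℝ} {A32 : Matrix i3 i2 ℝ} {A33 A33' : Matrix i3 i3 ℝ}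
    {A34 : Matrix i3 i4 ℝ}
    {A41 : Matrix i4 i1 ℝ} {A42 : Matrix i4 i2 ℝ} {A43 : Matrix i4 i3 ℝ} {A44 : Matrix i4 i4 ℝ}
    (h : (blk4 A11 A12 A13 A14 A21 A22 A23 A24 A31 A32 A33 A34 A41 A42 A43 A44).NegDef)
    (h33 : (A33 - A33').PosSemidef) :
    (blk4 A11 A12 A13 A14 A21 A22 A23 A24 A31 A32 A33' A34 A41 A42 A43 A44).NegDef :=
  h.of_posSemidef_sub <| by
    rw [blk4_sub_blk4_third]
    exact .fromBlocks_zero .zero (.fromBlocks_zero .zero (.fromBlocks_zero h33 .zero))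

end BlockDefiniteness

section Slack

variable {m n p : Type*} [Fintype m] [Fintype n] [Fintype p]
  [DecidableEq m] [DecidableEq n] [DecidableEq p] {Φ S T : Matrix n n ℝ}

theorem NegDef.blk3_of_slack (hΦ : Φ.PosDef) (hS : IsUnit S) (hT : IsUnit T)
    {X : Matrix m m ℝ} {B : Matrix n m ℝ} {D : Matrix p m ℝ} {Y : Matrix p p ℝ}
    (h : (blk3 X (S * T * B)ᵀ Dᵀ (S * T * B) (Φ - S - Sᵀ) 0 D 0 Y).NegDef) :
    (blk3 X Bᵀ Dᵀ B (-(Tᵀ * Φ * T)⁻¹) 0 D 0 Y).NegDef := by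
  have := hS.invertible
  have := hT.invertible
  have hW : IsUnit ((S * T)⁻¹)ᵀ := (isUnit_transpose _).2 (isUnit_nonsing_inv_iff.2 (hS.mul hT))
  have h' := (h.blk3_of_posSemidef_sub_middle (A22' := -(S * Φ⁻¹ * Sᵀ))
    (by simpa using hΦ.posSemidef_sub_sub_add_mul_inv_mul_transpose S)).transpose_mul_mul_same
    (isUnit_blk3_diag isUnit_one hW isUnit_one)
  rw [blk3_diag_transpose_mul_mul] at h'
  convert h' using 2 <;> simp [mul_inv_rev, transpose_nonsing_inv, Matrix.mul_assoc]

theorem NegDef.blk4_of_slack (hΦ : Φ.PosDef) (hS : IsUnit S) (hT : IsUnit T)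
    {A : Matrix n n ℝ} {B : Matrix n m ℝ} {C : Matrix p n ℝ} {D : Matrix p m ℝ}
    {E : Matrix m m ℝ} {Y : Matrix p p ℝ}
    (h : (blk4 (-Φ) 0 (S * T * A * T⁻¹)ᵀ (C * T⁻¹)ᵀ 0 E (S * T * B)ᵀ Dᵀ
      (S * T * A * T⁻¹) (S * T * B) (Φ - S - Sᵀ) 0 (C * T⁻¹) D 0 Y).NegDef) :
    (blk4 (-(Tᵀ * Φ * T)) 0 Aᵀ Cᵀ 0 E Bᵀ Dᵀ A B (-(Tᵀ * Φ * T)⁻¹) 0 C D 0 Y).NegDef := by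
  have := hS.invertible
  have := hT.invertible
  have hW : IsUnit ((S * T)⁻¹)ᵀ := (isUnit_transpose _).2 (isUnit_nonsing_inv_iff.2 (hS.mul hT))
  have h' := (h.blk4_of_posSemidef_sub_third (A33' := -(S * Φ⁻¹ * Sᵀ))
    (by simpa using hΦ.posSemidef_sub_sub_add_mul_inv_mul_transpose S)).transpose_mul_mul_same
    (isUnit_blk4_diag hT isUnit_one hW isUnit_one)
  rw [blk4_diag_transpose_mul_mul] at h'
  convert h' using 2 <;> simp [mul_inv_rev, transpose_nonsing_inv, Matrix.mul_assoc]

end Slack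

end Matrix

theorem singular_control_sof_synthesis_general
    (k q r m p : ℕ)
    (A : Matrix (Fin q ⊕ Fin k) (Fin q ⊕ Fin k) ℝ)
    (Bw : Matrix (Fin q ⊕ Fin k) (Fin m) ℝ)
    (Bu : Matrix (Fin q ⊕ Fin k) (Fin q) ℝ)
    (Cz : Matrix (Fin p) (Fin q ⊕ Fin k) ℝ)
    (Dzw : Matrix (Fin p) (Fin m) ℝ)
    (Cy : Matrix (Fin r) (Fin q ⊕ Fin k) ℝ)
    (Dyw : Matrix (Fin r) (Fin m) ℝ)
    (Tu : Matrix (Fin q ⊕ Fin k) (Fin q ⊕ Fin k) ℝ) (hTu : IsUnit Tu)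
    (hTuBu : Tu * Bu = fromRows (1 : Matrix (Fin q) (Fin q) ℝ) (0 : Matrix (Fin k) (Fin q) ℝ))
    (Abar : Matrix (Fin q ⊕ Fin k) (Fin q ⊕ Fin k) ℝ) (hAbar : Abar = Tu * A * Tu⁻¹)
    (Bwbar : Matrix (Fin q ⊕ Fin k) (Fin m) ℝ) (hBwbar : Bwbar = Tu * Bw)
    (Czbar : Matrix (Fin p) (Fin q ⊕ Fin k) ℝ) (hCzbar : Czbar = Cz * Tu⁻¹)
    (Cybar : Matrix (Fin r) (Fin q ⊕ Fin k) ℝ) (hCybar : Cybar = Cy * Tu⁻¹)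
    (η : ℝ) (Ψ : Matrix (Fin m) (Fin m) ℝ)
    (Φbar : Matrix (Fin q ⊕ Fin k) (Fin q ⊕ Fin k) ℝ)
    (hΦbar : Φbar.PosDef)
    (S1 : Matrix (Fin q) (Fin q) ℝ) (hS1 : IsUnit S1)
    (S2 : Matrix (Fin k) (Fin k) ℝ) (hS2 : IsUnit S2)
    (Sbar : Matrix (Fin q ⊕ Fin k) (Fin q ⊕ Fin k) ℝ) (hSbar : Sbar = fromBlocks S1 0 0 S2)
    (L1 : Matrix (Fin q) (Fin r) ℝ)
    (L : Matrix (Fin q ⊕ Fin k) (Fin r) ℝ)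
    (hL : L = fromRows L1 (0 : Matrix (Fin k) (Fin r) ℝ))
    (h1 : (blk3 (Ψ - η • 1) (Sbar * Bwbar + L * Dyw)ᵀ Dzwᵀ
                (Sbar * Bwbar + L * Dyw) (Φbar - Sbar - Sbarᵀ) 0
                Dzw 0 (-1)).NegDef)
    (h2 : (blk4 (-Φbar) 0 (Sbar * Abar + L * Cybar)ᵀ Czbarᵀ
                0 ((-η) • 1 : Matrix (Fin m) (Fin m) ℝ) (Sbar * Bwbar + L * Dyw)ᵀ Dzwᵀ
                (Sbar * Abar + L * Cybar) (Sbar * Bwbar + L * Dyw) (Φbar - Sbar - Sbarᵀ) 0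
                Czbar Dzw 0 (-1)).NegDef)
    (K : Matrix (Fin q) (Fin r) ℝ) (hK : K = S1⁻¹ * L1)
    (Φ : Matrix (Fin q ⊕ Fin k) (Fin q ⊕ Fin k) ℝ) (hΦ : Φ = Tuᵀ * Φbar * Tu)
    (𝒜 : Matrix (Fin q ⊕ Fin k) (Fin q ⊕ Fin k) ℝ) (h𝒜 : 𝒜 = A + Bu * K * Cy)
    (ℬ : Matrix (Fin q ⊕ Fin k) (Fin m) ℝ) (hℬ : ℬ = Bw + Bu * K * Dyw)
    (𝒞 : Matrix (Fin p) (Fin q ⊕ Fin k) ℝ) (h𝒞 : 𝒞 = Cz)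
    (𝒟 : Matrix (Fin p) (Fin m) ℝ) (h𝒟 : 𝒟 = Dzw) :
    Φ.IsSymm ∧ Φ.PosDef ∧
    (blk3 (Ψ - η • 1) ℬᵀ 𝒟ᵀ
          ℬ (-Φ⁻¹) 0
          𝒟 0 (-1)).NegDef ∧
    (blk4 (-Φ) 0 𝒜ᵀ 𝒞ᵀ
          0 ((-η) • 1 : Matrix (Fin m) (Fin m) ℝ) ℬᵀ 𝒟ᵀ
          𝒜 ℬ (-Φ⁻¹) 0
          𝒞 𝒟 0 (-1)).NegDef := by
  subst hAbar hBwbar hCzbar hCybar hΦ h𝒜 hℬ h𝒞 h𝒟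
  have hS : IsUnit Sbar := hSbar ▸ isUnit_fromBlocks_zero₂₁.2 ⟨hS1, hS2⟩
  have hgain : Sbar * Tu * Bu * K = L := by
    have := hS1.invertible
    rw [Matrix.mul_assoc Sbar, hTuBu, hSbar, fromBlocks_mul_fromRows, hK, hL]
    simp
  have hB : Sbar * (Tu * Bw) + L * Dyw = Sbar * Tu * (Bw + Bu * K * Dyw) := by
    simp only [← hgain, Matrix.mul_add, Matrix.mul_assoc]
  have hA : Sbar * (Tu * A * Tu⁻¹) + L * (Cy * Tu⁻¹) =
      Sbar * Tu * (A + Bu * K * Cy) * Tu⁻¹ := by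
    simp only [← hgain, Matrix.mul_add, Matrix.add_mul, Matrix.mul_assoc]
  have hΦ : (Tuᵀ * Φbar * Tu).PosDef := by
    simpa [star_eq_conjTranspose] using hTu.posDef_star_left_conjugate_iff.2 hΦbar
  rw [hB] at h1
  rw [hB, hA] at h2
  exact ⟨isHermitian_iff_isSymm.1 hΦ.1, hΦ, h1.blk3_of_slack hΦbar hS hTu,
    h2.blk4_of_slack hΦbar hS hTu⟩

/-- Singular-control static output-feedback synthesis (`D_zu = 0`, `B_u` of full column rank
normalized by `T_u`): feasibility of the slack-variable synthesis LMIs with structured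
`S̄ = diag(S̄₁, S̄₂)` and `L = [L₁; 0]` yields the analysis LMIs for the closed-loop realization
with static gain `K = S̄₁⁻¹L₁` and Lyapunov matrix `Φ = T_uᵀ Φ̄ T_u`. The state space is indexed
by `Fin q ⊕ Fin k` (so `n = q + k`). -/
theorem singular_control_sof_synthesis
    (k q r m p : ℕ)
    (A : Matrix (Fin q ⊕ Fin k) (Fin q ⊕ Fin k) ℝ)
    (Bw : Matrix (Fin q ⊕ Fin k) (Fin m) ℝ)
    (Bu : Matrix (Fin q ⊕ Fin k) (Fin q) ℝ)
    (Cz : Matrix (Fin p) (Fin q ⊕ Fin k) ℝ)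
    (Dzw : Matrix (Fin p) (Fin m) ℝ)
    (Cy : Matrix (Fin r) (Fin q ⊕ Fin k) ℝ)
    (Dyw : Matrix (Fin r) (Fin m) ℝ)
    (Tu : Matrix (Fin q ⊕ Fin k) (Fin q ⊕ Fin k) ℝ) (hTu : IsUnit Tu)
    (hTuBu : Tu * Bu = fromRows (1 : Matrix (Fin q) (Fin q) ℝ) (0 : Matrix (Fin k) (Fin q) ℝ))
    (Abar : Matrix (Fin q ⊕ Fin k) (Fin q ⊕ Fin k) ℝ) (hAbar : Abar = Tu * A * Tu⁻¹)
    (Bwbar : Matrix (Fin q ⊕ Fin k) (Fin m) ℝ) (hBwbar : Bwbar = Tu * Bw)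
    (Czbar : Matrix (Fin p) (Fin q ⊕ Fin k) ℝ) (hCzbar : Czbar = Cz * Tu⁻¹)
    (Cybar : Matrix (Fin r) (Fin q ⊕ Fin k) ℝ) (hCybar : Cybar = Cy * Tu⁻¹)
    (η : ℝ) (Ψ : Matrix (Fin m) (Fin m) ℝ) (hΨs : Ψ.IsSymm) (hΨ : Ψ.PosDef)
    (Φbar : Matrix (Fin q ⊕ Fin k) (Fin q ⊕ Fin k) ℝ) (hΦbars : Φbar.IsSymm)
    (hΦbar : Φbar.PosDef)
    (S1 : Matrix (Fin q) (Fin q) ℝ) (hS1 : IsUnit S1)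
    (S2 : Matrix (Fin k) (Fin k) ℝ) (hS2 : IsUnit S2)
    (Sbar : Matrix (Fin q ⊕ Fin k) (Fin q ⊕ Fin k) ℝ) (hSbar : Sbar = fromBlocks S1 0 0 S2)
    (L1 : Matrix (Fin q) (Fin r) ℝ)
    (L : Matrix (Fin q ⊕ Fin k) (Fin r) ℝ)
    (hL : L = fromRows L1 (0 : Matrix (Fin k) (Fin r) ℝ))
    (h1 : (blk3 (Ψ - η • 1) (Sbar * Bwbar + L * Dyw)ᵀ Dzwᵀ
                (Sbar * Bwbar + L * Dyw) (Φbar - Sbar - Sbarᵀ) 0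
                Dzw 0 (-1)).NegDef)
    (h2 : (blk4 (-Φbar) 0 (Sbar * Abar + L * Cybar)ᵀ Czbarᵀ
                0 ((-η) • 1 : Matrix (Fin m) (Fin m) ℝ) (Sbar * Bwbar + L * Dyw)ᵀ Dzwᵀ
                (Sbar * Abar + L * Cybar) (Sbar * Bwbar + L * Dyw) (Φbar - Sbar - Sbarᵀ) 0
                Czbar Dzw 0 (-1)).NegDef)
    (K : Matrix (Fin q) (Fin r) ℝ) (hK : K = S1⁻¹ * L1)
    (Φ : Matrix (Fin q ⊕ Fin k) (Fin q ⊕ Fin k) ℝ) (hΦ : Φ = Tuᵀ * Φbar * Tu)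
    (𝒜 : Matrix (Fin q ⊕ Fin k) (Fin q ⊕ Fin k) ℝ) (h𝒜 : 𝒜 = A + Bu * K * Cy)
    (ℬ : Matrix (Fin q ⊕ Fin k) (Fin m) ℝ) (hℬ : ℬ = Bw + Bu * K * Dyw)
    (𝒞 : Matrix (Fin p) (Fin q ⊕ Fin k) ℝ) (h𝒞 : 𝒞 = Cz)
    (𝒟 : Matrix (Fin p) (Fin m) ℝ) (h𝒟 : 𝒟 = Dzw) :
    Φ.IsSymm ∧ Φ.PosDef ∧
    (blk3 (Ψ - η • 1) ℬᵀ 𝒟ᵀ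
          ℬ (-Φ⁻¹) 0
          𝒟 0 (-1)).NegDef ∧
    (blk4 (-Φ) 0 𝒜ᵀ 𝒞ᵀ
          0 ((-η) • 1 : Matrix (Fin m) (Fin m) ℝ) ℬᵀ 𝒟ᵀ
          𝒜 ℬ (-Φ⁻¹) 0
          𝒞 𝒟 0 (-1)).NegDef :=
  singular_control_sof_synthesis_general k q r m p A Bw Bu Cz Dzw Cy Dyw Tu hTu hTuBu Abar hAbar
    Bwbar hBwbar Czbar hCzbar Cybar hCybar η Ψ Φbar hΦbar S1 hS1 S2 hS2 Sbar hSbar L1 L hL h1 h2 K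
    hK Φ hΦ 𝒜 h𝒜 ℬ hℬ 𝒞 h𝒞 𝒟 h𝒟
end

section
/- Let A (n×n), B_w (n×m), B_u (n×q), C_z (p×n), D_zw (p×m), D_zu (p×q), C_y (r×n) be real matrices of a plant with D_yw = 0, and let T_y be an invertible real n×n matrix with C_y T_y⁻¹ = [I_r, 0]. Set Ā := T_y A T_y⁻¹, B̄_w := T_y B_w, B̄_u := T_y B_u, C̄_z := C_z T_y⁻¹. Let η be a real number, Ψ a real symmetric positive definite m×m matrix, Π̄ a real symmetric positive definite n×n matrix, R̄ the block-diagonal real n×n matrix with diagonal blocks R̄₁ (r×r, invertible) and R̄₂ ((n−r)×(n−r), invertible), and M := [M₁, 0] a real q×n matrix with left block M₁ (q×r). Suppose the symmetric block matrix with block rows [Ψ − η·I_m, B̄_wᵀ, D_zwᵀ], [B̄_w, −Π̄, 0], [D_zw, 0, −I_p] is negative definite, and the symmetric block matrix with block rows [Π̄ − R̄ − R̄ᵀ, 0, (ĀR̄ + B̄_uM)ᵀ, (C̄_zR̄ + D_zuM)ᵀ], [0, −η·I_m, B̄_wᵀ, D_zwᵀ], [ĀR̄ + B̄_uM, B̄_w,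 −Π̄, 0], [C̄_zR̄ + D_zuM, D_zw, 0, −I_p] is negative definite. Then, with K := M₁R̄₁⁻¹, Π := T_y⁻¹ Π̄ T_y^{−ᵀ}, Φ := Π⁻¹, 𝒜 := A + B_uKC_y, ℬ := B_w, 𝒞 := C_z + D_zuKC_y, 𝒟 := D_zw, the matrix Φ is symmetric positive definite, the symmetric block matrix with block rows [Ψ − η·I_m, ℬᵀ, 𝒟ᵀ], [ℬ, −Φ⁻¹, 0], [𝒟, 0, −I_p] is negative definite, and the symmetric block matrix with block rows [−Φ, 0, 𝒜ᵀ, 𝒞ᵀ], [0, −η·I_m, ℬᵀ, 𝒟ᵀ], [𝒜, ℬ, −Φ⁻¹, 0], [𝒞, 𝒟, 0, −I_p] is negative definite. -/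
open Matrix

/-!
The synthesis LMIs turn into the analysis LMIs under congruence. Since
`(R̄ - Π̄)ᵀ Π̄⁻¹ (R̄ - Π̄) ≥ 0`, the slack block `Π̄ - R̄ - R̄ᵀ` dominates `-R̄ᵀ Π̄⁻¹ R̄`, so it
may be replaced by the latter. Congruence with `diag(R̄⁻¹ T_y, I, T_y^{-ᵀ}, I)` then yields
the analysis LMI: the block structure of `R̄` and `M` gives `M R̄⁻¹ = K C_y T_y⁻¹`, hence
`T_y⁻¹ (Ā R̄ + B̄_u M) R̄⁻¹ T_y = A + B_u K C_y`, and `(R̄⁻¹ T_y)ᵀ R̄ᵀ Π̄⁻¹ R̄ (R̄⁻¹ T_y) = Φ`.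
The first LMI only needs the congruence `diag(I, T_y^{-ᵀ}, I)`.
-/

open scoped MatrixOrder

namespace Matrix

variable {n : Type*} [Fintype n]

theorem NegDef.of_le {X Y : Matrix n n ℝ} (hX : X.NegDef) (hYX : Y ≤ X) : Y.NegDef := by
  rw [NegDef, show -Y = -X + (X - Y) by abel]
  exact hX.add_posSemidef hYX

theorem NegDef.transpose_mul_mul_same_s17 [DecidableEq n] {X S : Matrix n n ℝ} (hX : X.NegDef)
    (hS : IsUnit S) : (Sᵀ * X * S).NegDef := by
  have h := (IsUnit.posDef_star_left_conjugate_iff hS).2 hX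
  rwa [star_eq_conjTranspose, conjTranspose_eq_transpose_of_trivial, Matrix.mul_neg,
    Matrix.neg_mul] at h

theorem PosDef.neg_transpose_mul_inv_mul_le [DecidableEq n] {P : Matrix n n ℝ} (hP : P.PosDef)
    (R : Matrix n n ℝ) : -(Rᵀ * P⁻¹ * R) ≤ P - R - Rᵀ := by
  have hPP : P * P⁻¹ = 1 := P.mul_nonsing_inv ((isUnit_iff_isUnit_det P).mp hP.isUnit)
  have hPt : Pᵀ = P := (isHermitian_iff_isSymm.mp hP.isHermitian).eq
  have h : P - R - Rᵀ - -(Rᵀ * P⁻¹ * R) = (R - P)ᵀ * P⁻¹ * (R - P) := by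
    simp only [transpose_sub, hPt, Matrix.sub_mul, Matrix.mul_sub, Matrix.mul_assoc, hPP,
      P.nonsing_inv_mul ((isUnit_iff_isUnit_det P).mp hP.isUnit), Matrix.mul_one, Matrix.one_mul]
    abel
  rw [le_iff, h]
  simpa using hP.inv.posSemidef.conjTranspose_mul_mul_same (R - P)

theorem PosSemidef.fromBlocks_zero_zero_zero {m : Type*} [Fintype m] [DecidableEq n]
    {A : Matrix n n ℝ} (hA : A.PosSemidef) : (fromBlocks A 0 0 (0 : Matrix m m ℝ)).PosSemidef := by
  have h := hA.conjTranspose_mul_mul_same (fromCols (1 : Matrix n n ℝ) (0 : Matrix n m ℝ))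
  rw [conjTranspose_eq_transpose_of_trivial, transpose_fromCols, fromRows_mul,
    fromRows_mul_fromCols] at h
  simpa using h

end Matrix

section BlockCongruence

variable {i1 i2 i3 i4 : Type*} [Fintype i1] [Fintype i2] [Fintype i3] [Fintype i4]
  [DecidableEq i1]

theorem Matrix.NegDef.blk3_congr [DecidableEq i2] [DecidableEq i3]
    {X11 : Matrix i1 i1 ℝ} {X12 : Matrix i1 i2 ℝ} {X13 : Matrix i1 i3 ℝ}
    {X21 : Matrix i2 i1 ℝ} {X22 : Matrix i2 i2 ℝ} {X23 : Matrix i2 i3 ℝ}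
    {X31 : Matrix i3 i1 ℝ} {X32 : Matrix i3 i2 ℝ} {X33 : Matrix i3 i3 ℝ}
    (h : (blk3 X11 X12 X13 X21 X22 X23 X31 X32 X33).NegDef)
    {D1 : Matrix i1 i1 ℝ} {D2 : Matrix i2 i2 ℝ} {D3 : Matrix i3 i3 ℝ}
    (hD1 : IsUnit D1) (hD2 : IsUnit D2) (hD3 : IsUnit D3) :
    (blk3 (D1ᵀ * X11 * D1) (D1ᵀ * X12 * D2) (D1ᵀ * X13 * D3)
          (D2ᵀ * X21 * D1) (D2ᵀ * X22 * D2) (D2ᵀ * X23 * D3)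
          (D3ᵀ * X31 * D1) (D3ᵀ * X32 * D2) (D3ᵀ * X33 * D3)).NegDef := by
  have hD : IsUnit (blk3 D1 0 0 0 D2 0 0 0 D3) := by
    simp [blk3, isUnit_fromBlocks_zero₂₁, hD1, hD2, hD3]
  convert h.transpose_mul_mul_same_s17 hD using 1
  simp [blk3, fromBlocks_transpose, fromBlocks_multiply, mul_fromCols, fromRows_mul,
    fromCols_mul_fromBlocks, fromBlocks_mul_fromRows, Matrix.mul_assoc]

theorem Matrix.NegDef.blk4_congr [DecidableEq i2] [DecidableEq i3] [DecidableEq i4]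
    {X11 : Matrix i1 i1 ℝ} {X12 : Matrix i1 i2 ℝ} {X13 : Matrix i1 i3 ℝ} {X14 : Matrix i1 i4 ℝ}
    {X21 : Matrix i2 i1 ℝ} {X22 : Matrix i2 i2 ℝ} {X23 : Matrix i2 i3 ℝ} {X24 : Matrix i2 i4 ℝ}
    {X31 : Matrix i3 i1 ℝ} {X32 : Matrix i3 i2 ℝ} {X33 : Matrix i3 i3 ℝ} {X34 : Matrix i3 i4 ℝ}
    {X41 : Matrix i4 i1 ℝ} {X42 : Matrix i4 i2 ℝ} {X43 : Matrix i4 i3 ℝ} {X44 : Matrix i4 i4 ℝ}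
    (h : (blk4 X11 X12 X13 X14 X21 X22 X23 X24 X31 X32 X33 X34 X41 X42 X43 X44).NegDef)
    {D1 : Matrix i1 i1 ℝ} {D2 : Matrix i2 i2 ℝ} {D3 : Matrix i3 i3 ℝ} {D4 : Matrix i4 i4 ℝ}
    (hD1 : IsUnit D1) (hD2 : IsUnit D2) (hD3 : IsUnit D3) (hD4 : IsUnit D4) :
    (blk4 (D1ᵀ * X11 * D1) (D1ᵀ * X12 * D2) (D1ᵀ * X13 * D3) (D1ᵀ * X14 * D4)
          (D2ᵀ * X21 * D1) (D2ᵀ * X22 * D2) (D2ᵀ * X23 * D3) (D2ᵀ * X24 * D4)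
          (D3ᵀ * X31 * D1) (D3ᵀ * X32 * D2) (D3ᵀ * X33 * D3) (D3ᵀ * X34 * D4)
          (D4ᵀ * X41 * D1) (D4ᵀ * X42 * D2) (D4ᵀ * X43 * D3) (D4ᵀ * X44 * D4)).NegDef := by
  have hD : IsUnit (blk4 D1 0 0 0 0 D2 0 0 0 0 D3 0 0 0 0 D4) := by
    simp [blk4, blk3, isUnit_fromBlocks_zero₂₁, hD1, hD2, hD3, hD4]
  convert h.transpose_mul_mul_same_s17 hD using 1
  simp [blk4, blk3, fromBlocks_transpose, fromBlocks_multiply, mul_fromCols, fromRows_mul,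
    fromCols_mul_fromBlocks, fromBlocks_mul_fromRows, Matrix.mul_assoc]

theorem Matrix.NegDef.blk4_of_le
    {X11 Y11 : Matrix i1 i1 ℝ} {X12 : Matrix i1 i2 ℝ} {X13 : Matrix i1 i3 ℝ}
    {X14 : Matrix i1 i4 ℝ}
    {X21 : Matrix i2 i1 ℝ} {X22 : Matrix i2 i2 ℝ} {X23 : Matrix i2 i3 ℝ} {X24 : Matrix i2 i4 ℝ}
    {X31 : Matrix i3 i1 ℝ} {X32 : Matrix i3 i2 ℝ} {X33 : Matrix i3 i3 ℝ} {X34 : Matrix i3 i4 ℝ}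
    {X41 : Matrix i4 i1 ℝ} {X42 : Matrix i4 i2 ℝ} {X43 : Matrix i4 i3 ℝ} {X44 : Matrix i4 i4 ℝ}
    (h : (blk4 X11 X12 X13 X14 X21 X22 X23 X24 X31 X32 X33 X34 X41 X42 X43 X44).NegDef)
    (hY : Y11 ≤ X11) :
    (blk4 Y11 X12 X13 X14 X21 X22 X23 X24 X31 X32 X33 X34 X41 X42 X43 X44).NegDef := by
  refine h.of_le ?_
  have hsub : blk4 X11 X12 X13 X14 X21 X22 X23 X24 X31 X32 X33 X34 X41 X42 X43 X44
      - blk4 Y11 X12 X13 X14 X21 X22 X23 X24 X31 X32 X33 X34 X41 X42 X43 X44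
      = fromBlocks (X11 - Y11) 0 0 0 := by
    ext (i | i | i | i) (j | j | j | j) <;> simp [blk4, blk3]
  rw [le_iff, hsub]
  exact hY.fromBlocks_zero_zero_zero

end BlockCongruence

section CoordinateChange

variable {n m p q r : Type*} [Fintype n] [DecidableEq n]

theorem fromCols_zero_mul_fromBlocks_inv {k : Type*} [Fintype r] [DecidableEq r] [Fintype k]
    [DecidableEq k] {R1 : Matrix r r ℝ} {R2 : Matrix k k ℝ} (hR1 : IsUnit R1) (hR2 : IsUnit R2)
    (M1 : Matrix q r ℝ) :
    fromCols M1 (0 : Matrix q k ℝ) * (fromBlocks R1 0 0 R2)⁻¹ =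
      M1 * R1⁻¹ * fromCols 1 (0 : Matrix r k ℝ) := by
  rw [inv_fromBlocks_zero₂₁_of_isUnit_iff _ _ _ (iff_of_true hR1 hR2), fromCols_mul_fromBlocks,
    mul_fromCols]
  simp

theorem closedLoop_of_mul_inv_eq [Fintype q] [Fintype r] {T R : Matrix n n ℝ} (hT : IsUnit T)
    (hR : IsUnit R) {M : Matrix q n ℝ} {K : Matrix q r ℝ} {Cy : Matrix r n ℝ}
    (hM : M * R⁻¹ = K * (Cy * T⁻¹)) (C : Matrix p n ℝ) (D : Matrix p q ℝ) :
    (C * T⁻¹ * R + D * M) * (R⁻¹ * T) = C + D * K * Cy := by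
  have hR' : R * R⁻¹ = 1 := R.mul_nonsing_inv ((isUnit_iff_isUnit_det R).mp hR)
  have hT' : T⁻¹ * T = 1 := T.nonsing_inv_mul ((isUnit_iff_isUnit_det T).mp hT)
  calc (C * T⁻¹ * R + D * M) * (R⁻¹ * T)
      = C * (T⁻¹ * T) + D * (M * R⁻¹) * T := by
        simp only [Matrix.add_mul, Matrix.mul_assoc, ← Matrix.mul_assoc R, hR', Matrix.one_mul]
    _ = C + D * K * Cy := by rw [hT', hM]; simp only [Matrix.mul_assoc, hT', Matrix.mul_one]

theorem transpose_mul_mul_eq_inv {R T : Matrix n n ℝ} (hR : IsUnit R) (hT : IsUnit T)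
    (P : Matrix n n ℝ) :
    (R⁻¹ * T)ᵀ * (Rᵀ * P⁻¹ * R) * (R⁻¹ * T) = (T⁻¹ * P * (Tᵀ)⁻¹)⁻¹ := by
  have hdR := (isUnit_iff_isUnit_det R).mp hR
  have hdT := (isUnit_iff_isUnit_det T).mp hT
  have hdRt : IsUnit Rᵀ.det := by rwa [det_transpose]
  have hdTt : IsUnit Tᵀ.det := by rwa [det_transpose]
  rw [Matrix.mul_inv_rev, Matrix.mul_inv_rev, nonsing_inv_nonsing_inv _ hdT,
    nonsing_inv_nonsing_inv _ hdTt, transpose_mul, transpose_nonsing_inv]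
  simp only [Matrix.mul_assoc, nonsing_inv_mul_cancel_left _ _ hdRt,
    mul_nonsing_inv_cancel_left _ _ hdR]

theorem transpose_mul_transpose_inv_cancel {T : Matrix n n ℝ} (hT : IsUnit T) (B : Matrix n m ℝ) :
    (T * B)ᵀ * (Tᵀ)⁻¹ = Bᵀ := by
  rw [transpose_mul, mul_nonsing_inv_cancel_right _ _ ((isUnit_iff_isUnit_det _).mp
    ((isUnit_transpose T).2 hT))]

theorem isUnit_transpose_inv {T : Matrix n n ℝ} (hT : IsUnit T) : IsUnit (Tᵀ)⁻¹ :=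
  isUnit_nonsing_inv_iff.2 ((isUnit_transpose T).2 hT)

variable [Fintype m] [DecidableEq m] [Fintype p] [DecidableEq p] {T : Matrix n n ℝ}

theorem analysis_lmi₁_of_synthesis_lmi₁ (hT : IsUnit T) {X : Matrix m m ℝ} {B : Matrix n m ℝ}
    {D : Matrix p m ℝ} {P : Matrix n n ℝ}
    (h : (blk3 X (T * B)ᵀ Dᵀ
               (T * B) (-P) 0
               D 0 (-1)).NegDef) :
    (blk3 X Bᵀ Dᵀ
          B (-(T⁻¹ * P * (Tᵀ)⁻¹)) 0
          D 0 (-1)).NegDef := by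
  have := h.blk3_congr isUnit_one (isUnit_transpose_inv hT) isUnit_one
  simpa only [transpose_one, Matrix.one_mul, Matrix.mul_one, Matrix.mul_zero, Matrix.zero_mul,
    Matrix.mul_neg, Matrix.neg_mul, transpose_nonsing_inv, transpose_transpose,
    transpose_mul_transpose_inv_cancel hT,
    nonsing_inv_mul_cancel_left _ _ ((isUnit_iff_isUnit_det _).mp hT)] using this

theorem analysis_lmi₂_of_synthesis_lmi₂ [Fintype q] [Fintype r] (hT : IsUnit T)
    {R P : Matrix n n ℝ} (hR : IsUnit R) (hP : P.PosDef)
    {A : Matrix n n ℝ} {Bw : Matrix n m ℝ} {Bu : Matrix n q ℝ}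
    {C : Matrix p n ℝ} {Dw : Matrix p m ℝ} {Du : Matrix p q ℝ} {M : Matrix q n ℝ}
    {K : Matrix q r ℝ} {Cy : Matrix r n ℝ} (hM : M * R⁻¹ = K * (Cy * T⁻¹)) {W : Matrix m m ℝ}
    (h : (blk4 (P - R - Rᵀ) 0 (T * A * T⁻¹ * R + T * Bu * M)ᵀ (C * T⁻¹ * R + Du * M)ᵀ
               0 W (T * Bw)ᵀ Dwᵀ
               (T * A * T⁻¹ * R + T * Bu * M) (T * Bw) (-P) 0
               (C * T⁻¹ * R + Du * M) Dw 0 (-1)).NegDef) :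
    (blk4 (-(T⁻¹ * P * (Tᵀ)⁻¹)⁻¹) 0 (A + Bu * K * Cy)ᵀ (C + Du * K * Cy)ᵀ
          0 W Bwᵀ Dwᵀ
          (A + Bu * K * Cy) Bw (-(T⁻¹ * P * (Tᵀ)⁻¹)) 0
          (C + Du * K * Cy) Dw 0 (-1)).NegDef := by
  have hdT := (isUnit_iff_isUnit_det T).mp hT
  have eA : T⁻¹ * (T * A * T⁻¹ * R + T * Bu * M) * (R⁻¹ * T) = A + Bu * K * Cy := by
    have hcancel : T⁻¹ * (T * A * T⁻¹ * R + T * Bu * M) = A * T⁻¹ * R + Bu * M := by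
      simp only [Matrix.mul_add, ← Matrix.mul_assoc, nonsing_inv_mul _ hdT, Matrix.one_mul]
    rw [hcancel]
    exact closedLoop_of_mul_inv_eq hT hR hM A Bu
  have eAt : (R⁻¹ * T)ᵀ * (T * A * T⁻¹ * R + T * Bu * M)ᵀ * (Tᵀ)⁻¹ = (A + Bu * K * Cy)ᵀ := by
    rw [← transpose_nonsing_inv, ← transpose_mul, ← transpose_mul, ← Matrix.mul_assoc, eA]
  have eC := closedLoop_of_mul_inv_eq hT hR hM C Du
  have eCt : (R⁻¹ * T)ᵀ * (C * T⁻¹ * R + Du * M)ᵀ = (C + Du * K * Cy)ᵀ := by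
    rw [← transpose_mul, eC]
  have := (h.blk4_of_le (hP.neg_transpose_mul_inv_mul_le R)).blk4_congr
    ((isUnit_nonsing_inv_iff.2 hR).mul hT) isUnit_one (isUnit_transpose_inv hT) isUnit_one
  simpa only [transpose_one, Matrix.one_mul, Matrix.mul_one, Matrix.mul_zero, Matrix.zero_mul,
    Matrix.mul_neg, Matrix.neg_mul, eA, eAt, eC, eCt, transpose_mul_mul_eq_inv hR hT,
    transpose_nonsing_inv, transpose_transpose, transpose_mul_transpose_inv_cancel hT,
    nonsing_inv_mul_cancel_left _ _ hdT] using this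

end CoordinateChange

theorem singular_filtering_sof_synthesis_general
    (k q r m p : ℕ)
    (A : Matrix (Fin r ⊕ Fin k) (Fin r ⊕ Fin k) ℝ)
    (Bw : Matrix (Fin r ⊕ Fin k) (Fin m) ℝ)
    (Bu : Matrix (Fin r ⊕ Fin k) (Fin q) ℝ)
    (Cz : Matrix (Fin p) (Fin r ⊕ Fin k) ℝ)
    (Dzw : Matrix (Fin p) (Fin m) ℝ)
    (Dzu : Matrix (Fin p) (Fin q) ℝ)
    (Cy : Matrix (Fin r) (Fin r ⊕ Fin k) ℝ)
    (Ty : Matrix (Fin r ⊕ Fin k) (Fin r ⊕ Fin k) ℝ) (hTy : IsUnit Ty)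
    (hCyTy : Cy * Ty⁻¹ =
      fromCols (1 : Matrix (Fin r) (Fin r) ℝ) (0 : Matrix (Fin r) (Fin k) ℝ))
    (Abar : Matrix (Fin r ⊕ Fin k) (Fin r ⊕ Fin k) ℝ) (hAbar : Abar = Ty * A * Ty⁻¹)
    (Bwbar : Matrix (Fin r ⊕ Fin k) (Fin m) ℝ) (hBwbar : Bwbar = Ty * Bw)
    (Bubar : Matrix (Fin r ⊕ Fin k) (Fin q) ℝ) (hBubar : Bubar = Ty * Bu)
    (Czbar : Matrix (Fin p) (Fin r ⊕ Fin k) ℝ) (hCzbar : Czbar = Cz * Ty⁻¹)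
    (η : ℝ) (Ψ : Matrix (Fin m) (Fin m) ℝ)
    (Pibar : Matrix (Fin r ⊕ Fin k) (Fin r ⊕ Fin k) ℝ)
    (hPibar : Pibar.PosDef)
    (R1 : Matrix (Fin r) (Fin r) ℝ) (hR1 : IsUnit R1)
    (R2 : Matrix (Fin k) (Fin k) ℝ) (hR2 : IsUnit R2)
    (Rbar : Matrix (Fin r ⊕ Fin k) (Fin r ⊕ Fin k) ℝ) (hRbar : Rbar = fromBlocks R1 0 0 R2)
    (M1 : Matrix (Fin q) (Fin r) ℝ)
    (M : Matrix (Fin q) (Fin r ⊕ Fin k) ℝ)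
    (hM : M = fromCols M1 (0 : Matrix (Fin q) (Fin k) ℝ))
    (h1 : (blk3 (Ψ - η • 1) Bwbarᵀ Dzwᵀ
                Bwbar (-Pibar) 0
                Dzw 0 (-1)).NegDef)
    (h2 : (blk4 (Pibar - Rbar - Rbarᵀ) 0 (Abar * Rbar + Bubar * M)ᵀ
                  (Czbar * Rbar + Dzu * M)ᵀ
                0 ((-η) • 1 : Matrix (Fin m) (Fin m) ℝ) Bwbarᵀ Dzwᵀ
                (Abar * Rbar + Bubar * M) Bwbar (-Pibar) 0
                (Czbar * Rbar + Dzu * M) Dzw 0 (-1)).NegDef)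
    (K : Matrix (Fin q) (Fin r) ℝ) (hK : K = M1 * R1⁻¹)
    (Pi : Matrix (Fin r ⊕ Fin k) (Fin r ⊕ Fin k) ℝ) (hPidef : Pi = Ty⁻¹ * Pibar * (Tyᵀ)⁻¹)
    (Φ : Matrix (Fin r ⊕ Fin k) (Fin r ⊕ Fin k) ℝ) (hΦ : Φ = Pi⁻¹)
    (𝒜 : Matrix (Fin r ⊕ Fin k) (Fin r ⊕ Fin k) ℝ) (h𝒜 : 𝒜 = A + Bu * K * Cy)
    (ℬ : Matrix (Fin r ⊕ Fin k) (Fin m) ℝ) (hℬ : ℬ = Bw)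
    (𝒞 : Matrix (Fin p) (Fin r ⊕ Fin k) ℝ) (h𝒞 : 𝒞 = Cz + Dzu * K * Cy)
    (𝒟 : Matrix (Fin p) (Fin m) ℝ) (h𝒟 : 𝒟 = Dzw) :
    Φ.IsSymm ∧ Φ.PosDef ∧
    (blk3 (Ψ - η • 1) ℬᵀ 𝒟ᵀ
          ℬ (-Φ⁻¹) 0
          𝒟 0 (-1)).NegDef ∧
    (blk4 (-Φ) 0 𝒜ᵀ 𝒞ᵀ
          0 ((-η) • 1 : Matrix (Fin m) (Fin m) ℝ) ℬᵀ 𝒟ᵀ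
          𝒜 ℬ (-Φ⁻¹) 0
          𝒞 𝒟 0 (-1)).NegDef := by
  subst hAbar hBwbar hBubar hCzbar hΦ hℬ h𝒟 h𝒜 h𝒞 hK hPidef
  have hPi : (Ty⁻¹ * Pibar * (Tyᵀ)⁻¹).PosDef := by
    simpa only [star_eq_conjTranspose, conjTranspose_eq_transpose_of_trivial,
      transpose_nonsing_inv] using
      (IsUnit.posDef_star_right_conjugate_iff (isUnit_nonsing_inv_iff.2 hTy)).2 hPibar
  have hgain : M * Rbar⁻¹ = M1 * R1⁻¹ * (Cy * Ty⁻¹) := by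
    rw [hM, hRbar, hCyTy, fromCols_zero_mul_fromBlocks_inv hR1 hR2]
  rw [nonsing_inv_nonsing_inv _ ((isUnit_iff_isUnit_det _).mp hPi.isUnit)]
  exact ⟨isHermitian_iff_isSymm.1 hPi.inv.isHermitian, hPi.inv,
    analysis_lmi₁_of_synthesis_lmi₁ hTy h1,
    analysis_lmi₂_of_synthesis_lmi₂ hTy (hRbar ▸ isUnit_fromBlocks_zero₂₁.2 ⟨hR1, hR2⟩) hPibar
      hgain h2⟩

/-- Singular-filtering static output-feedback synthesis (`D_yw = 0`, `C_y` of full row rank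
normalized by `T_y`): feasibility of the slack-variable synthesis LMIs with structured
`R̄ = diag(R̄₁, R̄₂)` and `M = [M₁, 0]` yields the analysis LMIs for the closed-loop realization
with static gain `K = M₁R̄₁⁻¹`, `Π = T_y⁻¹ Π̄ T_y^{−ᵀ}` and `Φ = Π⁻¹`. The state space is
indexed by `Fin r ⊕ Fin k` (so `n = r + k`). -/
theorem singular_filtering_sof_synthesis
    (k q r m p : ℕ)
    (A : Matrix (Fin r ⊕ Fin k) (Fin r ⊕ Fin k) ℝ)
    (Bw : Matrix (Fin r ⊕ Fin k) (Fin m) ℝ)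
    (Bu : Matrix (Fin r ⊕ Fin k) (Fin q) ℝ)
    (Cz : Matrix (Fin p) (Fin r ⊕ Fin k) ℝ)
    (Dzw : Matrix (Fin p) (Fin m) ℝ)
    (Dzu : Matrix (Fin p) (Fin q) ℝ)
    (Cy : Matrix (Fin r) (Fin r ⊕ Fin k) ℝ)
    (Ty : Matrix (Fin r ⊕ Fin k) (Fin r ⊕ Fin k) ℝ) (hTy : IsUnit Ty)
    (hCyTy : Cy * Ty⁻¹ =
      fromCols (1 : Matrix (Fin r) (Fin r) ℝ) (0 : Matrix (Fin r) (Fin k) ℝ))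
    (Abar : Matrix (Fin r ⊕ Fin k) (Fin r ⊕ Fin k) ℝ) (hAbar : Abar = Ty * A * Ty⁻¹)
    (Bwbar : Matrix (Fin r ⊕ Fin k) (Fin m) ℝ) (hBwbar : Bwbar = Ty * Bw)
    (Bubar : Matrix (Fin r ⊕ Fin k) (Fin q) ℝ) (hBubar : Bubar = Ty * Bu)
    (Czbar : Matrix (Fin p) (Fin r ⊕ Fin k) ℝ) (hCzbar : Czbar = Cz * Ty⁻¹)
    (η : ℝ) (Ψ : Matrix (Fin m) (Fin m) ℝ) (hΨs : Ψ.IsSymm) (hΨ : Ψ.PosDef)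
    (Pibar : Matrix (Fin r ⊕ Fin k) (Fin r ⊕ Fin k) ℝ) (hPibars : Pibar.IsSymm)
    (hPibar : Pibar.PosDef)
    (R1 : Matrix (Fin r) (Fin r) ℝ) (hR1 : IsUnit R1)
    (R2 : Matrix (Fin k) (Fin k) ℝ) (hR2 : IsUnit R2)
    (Rbar : Matrix (Fin r ⊕ Fin k) (Fin r ⊕ Fin k) ℝ) (hRbar : Rbar = fromBlocks R1 0 0 R2)
    (M1 : Matrix (Fin q) (Fin r) ℝ)
    (M : Matrix (Fin q) (Fin r ⊕ Fin k) ℝ)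
    (hM : M = fromCols M1 (0 : Matrix (Fin q) (Fin k) ℝ))
    (h1 : (blk3 (Ψ - η • 1) Bwbarᵀ Dzwᵀ
                Bwbar (-Pibar) 0
                Dzw 0 (-1)).NegDef)
    (h2 : (blk4 (Pibar - Rbar - Rbarᵀ) 0 (Abar * Rbar + Bubar * M)ᵀ
                  (Czbar * Rbar + Dzu * M)ᵀ
                0 ((-η) • 1 : Matrix (Fin m) (Fin m) ℝ) Bwbarᵀ Dzwᵀ
                (Abar * Rbar + Bubar * M) Bwbar (-Pibar) 0
                (Czbar * Rbar + Dzu * M) Dzw 0 (-1)).NegDef)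
    (K : Matrix (Fin q) (Fin r) ℝ) (hK : K = M1 * R1⁻¹)
    (Pi : Matrix (Fin r ⊕ Fin k) (Fin r ⊕ Fin k) ℝ) (hPidef : Pi = Ty⁻¹ * Pibar * (Tyᵀ)⁻¹)
    (Φ : Matrix (Fin r ⊕ Fin k) (Fin r ⊕ Fin k) ℝ) (hΦ : Φ = Pi⁻¹)
    (𝒜 : Matrix (Fin r ⊕ Fin k) (Fin r ⊕ Fin k) ℝ) (h𝒜 : 𝒜 = A + Bu * K * Cy)
    (ℬ : Matrix (Fin r ⊕ Fin k) (Fin m) ℝ) (hℬ : ℬ = Bw)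
    (𝒞 : Matrix (Fin p) (Fin r ⊕ Fin k) ℝ) (h𝒞 : 𝒞 = Cz + Dzu * K * Cy)
    (𝒟 : Matrix (Fin p) (Fin m) ℝ) (h𝒟 : 𝒟 = Dzw) :
    Φ.IsSymm ∧ Φ.PosDef ∧
    (blk3 (Ψ - η • 1) ℬᵀ 𝒟ᵀ
          ℬ (-Φ⁻¹) 0
          𝒟 0 (-1)).NegDef ∧
    (blk4 (-Φ) 0 𝒜ᵀ 𝒞ᵀ
          0 ((-η) • 1 : Matrix (Fin m) (Fin m) ℝ) ℬᵀ 𝒟ᵀ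
          𝒜 ℬ (-Φ⁻¹) 0
          𝒞 𝒟 0 (-1)).NegDef :=
  singular_filtering_sof_synthesis_general k q r m p A Bw Bu Cz Dzw Dzu Cy Ty hTy hCyTy Abar hAbar
    Bwbar hBwbar Bubar hBubar Czbar hCzbar η Ψ Pibar hPibar R1 hR1 R2 hR2 Rbar hRbar M1 M hM h1 h2 K
    hK Pi hPidef Φ hΦ 𝒜 h𝒜 ℬ hℬ 𝒞 h𝒞 𝒟 h𝒟
end
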